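/- arXiv:1506.05390 — 5 statements merged into one kernel-verified Lean document; each statement's English description precedes it below -/
import Mathlib

section
/- Let E|F be a ramified quadratic extension of type (R-U). Then the different ideal 𝔇_{E|F} of O_E over O_F is the principal ideal generated by t, i.e. 𝔇_{E|F} = t·O_E; equivalently, the inverse different {α ∈ E : Tr_{E|F}(α·O_E) ⊆ O_F} equals (1/t)·O_E. -/
set_option synthInstance.maxHeartbeats 1000000
set_option maxHeartbeats 2000000

/-- **Inverse different in the (R-U) case.**
Let `F` be a finite extension of `ℚ₂` with ring of integers `O_F` (the integral closure of
`ℤ₂` in `F`) and uniformizer `π₀`, and let `E|F` be a ramified quadratic extension of type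
(R-U): `E = F(Π)` with `Π² − t·Π + π₀ = 0` for some `t ∈ O_F` with `π₀ ∣ t` and `t ∣ 2`,
and with ring of integers `O_E = O_F[Π]`.  Then the inverse different
`{α ∈ E : Tr_{E|F}(α·O_E) ⊆ O_F}` equals `(1/t)·O_E`; equivalently the different ideal
`𝔇_{E|F}` is the principal ideal `t·O_E`. -/
theorem inverse_different_RU
    (F : Type*) [Field F] [Algebra ℚ_[2] F] [FiniteDimensional ℚ_[2] F]
    [Algebra ℤ_[2] F] [IsScalarTower ℤ_[2] ℚ_[2] F]
    [IsLocalRing (integralClosure ℤ_[2] F)]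
    (π₀ t : integralClosure ℤ_[2] F)
    (hπ₀ : IsLocalRing.maximalIdeal (integralClosure ℤ_[2] F) = Ideal.span {π₀})
    (hπt : π₀ ∣ t) (ht2 : t ∣ 2)
    (E : Type*) [Field E] [Algebra F E] [FiniteDimensional F E]
    (hdeg : Module.finrank F E = 2)
    (ϖ : E)
    (hϖ : ϖ ^ 2 - algebraMap F E (t : F) * ϖ + algebraMap F E (π₀ : F) = 0)
    (hgen : Algebra.adjoin F {ϖ} = ⊤)
    (OE : Subring E)
    (hOE : ∀ x : E, x ∈ OE ↔ ∃ a b : integralClosure ℤ_[2] F,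
        x = algebraMap F E (a : F) + algebraMap F E (b : F) * ϖ) :
    ∀ α : E,
      (∀ x ∈ OE, Algebra.trace F E (α * x) ∈ integralClosure ℤ_[2] F) ↔
        ∃ y ∈ OE, α = (algebraMap F E (t : F))⁻¹ * y := by
  obtain ⟨s, hs⟩ := ht2
  haveI : CharZero F := charZero_of_injective_algebraMap (algebraMap ℚ_[2] F).injective
  have hsF : (2 : F) = (t : F) * (s : F) := by
    have h := congrArg (Subtype.val) hs
    norm_num at h
    exact h
  have ht0 : (t : F) ≠ 0 := by
    intro h
    have h2 : (2 : F) = 0 := by rw [hsF, h, zero_mul]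
    norm_num at h2
  -- the quadratic polynomial
  set p : Polynomial F := Polynomial.X ^ 2 - Polynomial.C (t : F) * Polynomial.X
      + Polynomial.C (π₀ : F) with hp
  have hpmonic : p.Monic := by
    rw [hp]
    monicity!
  have hpdeg : p.natDegree = 2 := by
    rw [hp]
    compute_degree!
  have hproot : Polynomial.aeval ϖ p = 0 := by
    simp only [hp, map_add, map_sub, map_mul, map_pow, Polynomial.aeval_X, Polynomial.aeval_C]
    exact hϖ
  have hϖint : IsIntegral F ϖ := Algebra.IsIntegral.isIntegral ϖ
  -- power basis
  let e : Algebra.adjoin F {ϖ} ≃ₐ[F] E :=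
    (Subalgebra.equivOfEq _ ⊤ hgen).trans Subalgebra.topEquiv
  let pb : PowerBasis F E := (Algebra.adjoin.powerBasis hϖint).map e
  have hpbgen : pb.gen = ϖ := by
    simp [pb, e, Algebra.adjoin.powerBasis_gen]
  have hpbdim : pb.dim = 2 := by rw [← pb.finrank, hdeg]
  have hmindeg : (minpoly F ϖ).natDegree = 2 := by
    rw [← hpbgen, pb.natDegree_minpoly, hpbdim]
  have hmin : minpoly F ϖ = p := by
    obtain ⟨r, hr⟩ := minpoly.dvd F ϖ hproot
    have hm0 : minpoly F ϖ ≠ 0 := minpoly.ne_zero hϖint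
    have hr0 : r ≠ 0 := by
      intro h; rw [h, mul_zero] at hr
      exact hpmonic.ne_zero hr
    have hrdeg : r.natDegree = 0 := by
      have := congrArg Polynomial.natDegree hr
      rw [Polynomial.natDegree_mul hm0 hr0, hpdeg, hmindeg] at this
      omega
    have hrC : r = Polynomial.C (r.coeff 0) := Polynomial.eq_C_of_natDegree_eq_zero hrdeg
    have hlc : r.coeff 0 = 1 := by
      have := congrArg Polynomial.leadingCoeff hr
      rw [Polynomial.leadingCoeff_mul, (minpoly.monic hϖint).leadingCoeff, one_mul,
        hpmonic.leadingCoeff] at this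
      rw [show (0 : ℕ) = r.natDegree from hrdeg.symm]
      exact this.symm
    rw [hr, hrC, hlc, map_one, mul_one]
  -- trace of ϖ
  have htrϖ : Algebra.trace F E ϖ = (t : F) := by
    have h1 := pb.trace_gen_eq_nextCoeff_minpoly
    rw [hpbgen, hmin] at h1
    rw [h1]
    have h2 : p.nextCoeff = -(t : F) := by
      rw [Polynomial.nextCoeff_of_natDegree_pos (by omega : 0 < p.natDegree), hpdeg]
      simp [hp]
    rw [h2, neg_neg]
  -- general trace formula
  have htr : ∀ c d : F,
      Algebra.trace F E (algebraMap F E c + algebraMap F E d * ϖ) = 2 * c + (t : F) * d := by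
    intro c d
    have h1 : algebraMap F E d * ϖ = d • ϖ := (Algebra.smul_def d ϖ).symm
    rw [map_add, h1, map_smul, Algebra.trace_algebraMap, htrϖ, hdeg, smul_eq_mul]
    push_cast
    ring
  -- decomposition of an arbitrary element
  have hdecomp : ∀ z : E, ∃ c d : F, z = algebraMap F E c + algebraMap F E d * ϖ := by
    intro z
    have hz : z ∈ Algebra.adjoin F {ϖ} := hgen ▸ Algebra.mem_top
    rw [Algebra.adjoin_singleton_eq_range_aeval] at hz
    obtain ⟨q, hq⟩ := hz
    have hzr : z = Polynomial.aeval ϖ (q %ₘ p) := by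
      calc z = Polynomial.aeval ϖ q := hq.symm
        _ = Polynomial.aeval ϖ (q %ₘ p + p * (q /ₘ p)) := by
              rw [Polynomial.modByMonic_add_div q p]
        _ = Polynomial.aeval ϖ (q %ₘ p) + Polynomial.aeval ϖ p * Polynomial.aeval ϖ (q /ₘ p) := by
              rw [map_add, map_mul]
        _ = Polynomial.aeval ϖ (q %ₘ p) := by rw [hproot, zero_mul, add_zero]
    have hrdeg : (q %ₘ p).degree ≤ 1 := by
      have h2 := Polynomial.degree_modByMonic_lt q hpmonic
      have h3 : p.degree = 2 := by
        rw [Polynomial.degree_eq_natDegree hpmonic.ne_zero, hpdeg]; rfl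
      rw [h3] at h2
      exact Order.le_of_lt_succ (by exact_mod_cast h2)
    obtain ⟨c1, c0, hr'⟩ : ∃ u v, q %ₘ p = Polynomial.C u * Polynomial.X + Polynomial.C v :=
      ⟨_, _, Polynomial.eq_X_add_C_of_degree_le_one hrdeg⟩
    refine ⟨c0, c1, ?_⟩
    rw [hzr, hr']
    simp only [map_add, map_mul, Polynomial.aeval_X, Polynomial.aeval_C]
    ring
  -- scaled trace
  have htrs : ∀ (k : F) (z : E),
      Algebra.trace F E (algebraMap F E k * z) = k * Algebra.trace F E z := by
    intro k z
    rw [← Algebra.smul_def, map_smul, smul_eq_mul]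
  intro α
  obtain ⟨c, d, hcd⟩ := hdecomp α
  constructor
  · intro h
    have h1mem : (1 : E) ∈ OE := (hOE 1).2 ⟨1, 0, by simp⟩
    have hϖmem : ϖ ∈ OE := (hOE ϖ).2 ⟨0, 1, by simp⟩
    have hA : 2 * c + (t : F) * d ∈ integralClosure ℤ_[2] F := by
      have := h 1 h1mem
      rwa [mul_one, hcd, htr] at this
    have hB : (t : F) * c + ((t : F) * (t : F) - 2 * (π₀ : F)) * d ∈ integralClosure ℤ_[2] F := by
      have hh := h ϖ hϖmem
      have e1 : α * ϖ = algebraMap F E (-(π₀ : F) * d) + algebraMap F E (c + (t : F) * d) * ϖ := by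
        rw [hcd]
        simp only [map_add, map_mul, map_neg]
        linear_combination algebraMap F E d * hϖ
      rw [e1, htr] at hh
      have e2 : 2 * (-(π₀ : F) * d) + (t : F) * (c + (t : F) * d)
          = (t : F) * c + ((t : F) * (t : F) - 2 * (π₀ : F)) * d := by ring
      rwa [e2] at hh
    -- the unit
    set w : integralClosure ℤ_[2] F := 1 - s * t + s * s * π₀ with hw
    have hwF : (w : F) = 1 - (s : F) * (t : F) + (s : F) * (s : F) * (π₀ : F) := by
      push_cast [hw]; ring
    have hwu : IsUnit w := by
      rw [← IsLocalRing.notMem_maximalIdeal]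
      intro hmem
      obtain ⟨k, hk⟩ := hπt
      have hst : s * t - s * s * π₀ ∈ IsLocalRing.maximalIdeal (integralClosure ℤ_[2] F) := by
        rw [hπ₀, Ideal.mem_span_singleton]
        exact ⟨s * k - s * s, by rw [hk]; ring⟩
      have h1 : (1 : integralClosure ℤ_[2] F) ∈ IsLocalRing.maximalIdeal (integralClosure ℤ_[2] F) := by
        have h2 := Ideal.add_mem _ hmem hst
        have e3 : w + (s * t - s * s * π₀) = 1 := by rw [hw]; ring
        rwa [e3] at h2
      exact (IsLocalRing.maximalIdeal.isMaximal (integralClosure ℤ_[2] F)).ne_top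
        (Ideal.eq_top_of_isUnit_mem _ h1 isUnit_one)
    obtain ⟨w', hww'⟩ := hwu.exists_right_inv
    have hww'F : (w : F) * (w' : F) = 1 := by exact_mod_cast congrArg (Subtype.val) hww'
    have hkey : (w : F) * ((t : F) * c)
        = ((t : F) * c + ((t : F) * (t : F) - 2 * (π₀ : F)) * d)
          - ((t : F) - (s : F) * (π₀ : F)) * (2 * c + (t : F) * d) := by
      rw [hwF]
      linear_combination ((π₀ : F) * d + ((t : F) - (s : F) * (π₀ : F)) * c) * hsF
    have htc : (t : F) * c ∈ integralClosure ℤ_[2] F := by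
      have e3 : (t : F) * c = (w' : F) * ((w : F) * ((t : F) * c)) := by
        rw [← mul_assoc, mul_comm (w' : F) (w : F), hww'F, one_mul]
      rw [e3, hkey]
      exact mul_mem w'.2 (sub_mem hB (mul_mem (sub_mem t.2 (mul_mem s.2 π₀.2)) hA))
    have htd : (t : F) * d ∈ integralClosure ℤ_[2] F := by
      have e4 : (t : F) * d = (2 * c + (t : F) * d) - (s : F) * ((t : F) * c) := by
        linear_combination (-c) * hsF
      rw [e4]
      exact sub_mem hA (mul_mem s.2 htc)
    refine ⟨algebraMap F E ((t : F) * c) + algebraMap F E ((t : F) * d) * ϖ,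
      (hOE _).2 ⟨⟨(t : F) * c, htc⟩, ⟨(t : F) * d, htd⟩, rfl⟩, ?_⟩
    have htE : algebraMap F E (t : F) ≠ 0 := fun hh =>
      ht0 ((algebraMap F E).injective (hh.trans (map_zero _).symm))
    rw [hcd, inv_mul_eq_div, eq_div_iff htE]
    simp only [map_mul]
    ring
  · rintro ⟨y, hy, rfl⟩ x hx
    obtain ⟨a, b, hy'⟩ := (hOE y).1 hy
    obtain ⟨a', b', hx'⟩ := (hOE x).1 hx
    have hPm : (a : F) * (a' : F) - (b : F) * (b' : F) * (π₀ : F) ∈ integralClosure ℤ_[2] F :=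
      sub_mem (mul_mem a.2 a'.2) (mul_mem (mul_mem b.2 b'.2) π₀.2)
    have hQm : (a : F) * (b' : F) + (a' : F) * (b : F) + (b : F) * (b' : F) * (t : F)
        ∈ integralClosure ℤ_[2] F :=
      add_mem (add_mem (mul_mem a.2 b'.2) (mul_mem a'.2 b.2)) (mul_mem (mul_mem b.2 b'.2) t.2)
    have hyx : y * x = algebraMap F E ((a : F) * (a' : F) - (b : F) * (b' : F) * (π₀ : F))
        + algebraMap F E ((a : F) * (b' : F) + (a' : F) * (b : F) + (b : F) * (b' : F) * (t : F))
          * ϖ := by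
      rw [hy', hx']
      simp only [map_add, map_mul, map_sub]
      linear_combination algebraMap F E (b : F) * algebraMap F E (b' : F) * hϖ
    have e5 : (algebraMap F E (t : F))⁻¹ * y * x = algebraMap F E ((t : F)⁻¹) * (y * x) := by
      rw [map_inv₀]; ring
    rw [e5, htrs, hyx, htr]
    have e6 : (t : F)⁻¹ * (2 * ((a : F) * (a' : F) - (b : F) * (b' : F) * (π₀ : F))
          + (t : F) * ((a : F) * (b' : F) + (a' : F) * (b : F) + (b : F) * (b' : F) * (t : F)))
        = (s : F) * ((a : F) * (a' : F) - (b : F) * (b' : F) * (π₀ : F))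
          + ((a : F) * (b' : F) + (a' : F) * (b : F) + (b : F) * (b' : F) * (t : F)) := by
      rw [hsF]
      field_simp
    rw [e6]
    exact add_mem (mul_mem s.2 hPm) hQm
end

section
/- Let E|F be a ramified quadratic extension of type (R-U). Then there exists a uniformizer π₁ of O_F that is not a norm from E: for every b ∈ E one has N_{E|F}(b) ≠ π₁. -/
/-!
Take `π₁ = π₀ + c t²`, where `c` is chosen so that `X² + X - c` has no root in the (finite,
characteristic `2`) residue field. Norms from `E` are the values of `x² + txy + π₀y²`. If this
equals `π₁`, comparing valuations shows `x, y ∈ O_F`, `π₀ ∣ x` and `y = 1 + d` with `π₀ ∣ d`, and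
then `x² + tx(1 + d) - ct² = -π₀ d (d + 2)`. The left side is `a² g`, with `a = t` and
`g = ξ² + ξ(1 + d) - c` if `x = tξ`, and with `a = x` and `g` a unit if `t ∤ x`. Since `t ∣ 2`,
either `t² ∣ d (d + 2)`, or `d (d + 2)` is `d²` times a unit and the parity of valuations in
`a² g = -π₀ d² u` forbids `g` to be a unit; either way `π₀ ∣ g`. For a unit `g` this is absurd,
and otherwise it gives `π₀ ∣ ξ² + ξ - c`, contradicting the choice of `c`.
-/

open IsLocalRing

section normForm

variable {R : Type*} [CommRing R]

/-- `N(x + yΠ)` when `Π² - tΠ + π = 0`. -/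
def normForm (t π x y : R) : R := x ^ 2 + t * x * y + π * y ^ 2

lemma map_normForm {S : Type*} [CommRing S] (f : R →+* S) (t π x y : R) :
    f (normForm t π x y) = normForm (f t) (f π) (f x) (f y) := by
  simp [normForm]

lemma normForm_mul_mul (t π c x y : R) :
    normForm t π (c * x) (c * y) = c ^ 2 * normForm t π x y := by
  unfold normForm; ring

variable [IsDomain R] {t π : R}

lemma Prime.dvd_and_dvd_of_sq_dvd_normForm (hπ : Prime π) (hπt : π ∣ t) {a b : R}
    (h : π ^ 2 ∣ normForm t π a b) : π ∣ a ∧ π ∣ b := by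
  have ha : π ∣ a := by
    refine hπ.dvd_of_dvd_pow (n := 2) ?_
    have : a ^ 2 = normForm t π a b - t * a * b - π * b ^ 2 := by unfold normForm; ring
    rw [this]
    exact dvd_sub (dvd_sub ((dvd_pow_self π two_ne_zero).trans h)
      ((hπt.mul_right a).mul_right b)) (dvd_mul_right π _)
  obtain ⟨a, rfl⟩ := ha
  refine ⟨dvd_mul_right π a, hπ.dvd_of_dvd_pow (n := 2) ?_⟩
  have : π * b ^ 2 = normForm t π (π * a) b - π ^ 2 * a ^ 2 - t * (π * a) * b := by
    unfold normForm; ring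
  have hsq : π * π ∣ π * b ^ 2 := by
    rw [this, ← sq]
    refine dvd_sub (dvd_sub h (dvd_mul_right _ _)) ?_
    rw [sq, show t * (π * a) * b = (t * π) * (a * b) by ring]
    exact (mul_dvd_mul_right hπt π).mul_right _
  exact (mul_dvd_mul_iff_left hπ.ne_zero).mp hsq

lemma Prime.pow_dvd_of_normForm_eq_pow_mul (hπ : Prime π) (hπt : π ∣ t) (r : R) :
    ∀ (n : ℕ) {a b : R}, normForm t π a b = π ^ (2 * n) * r → π ^ n ∣ a ∧ π ^ n ∣ b
  | 0, _, _, _ => by simp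
  | n + 1, a, b, h => by
    obtain ⟨⟨a, rfl⟩, ⟨b, rfl⟩⟩ := hπ.dvd_and_dvd_of_sq_dvd_normForm hπt
      ⟨π ^ (2 * n) * r, by rw [h]; ring⟩
    have h' : normForm t π a b = π ^ (2 * n) * r := by
      refine mul_left_cancel₀ (pow_ne_zero 2 hπ.ne_zero) ?_
      rw [← normForm_mul_mul, h]; ring
    obtain ⟨ha, hb⟩ := hπ.pow_dvd_of_normForm_eq_pow_mul hπt r n h'
    rw [pow_succ']
    exact ⟨mul_dvd_mul_left π ha, mul_dvd_mul_left π hb⟩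

lemma Prime.dvd_and_dvd_sub_one_of_normForm_eq (hπ : Prime π) (hπt : π ∣ t) (hπ2 : π ∣ 2)
    {c x y : R} (h : normForm t π x y = π + c * t ^ 2) : π ∣ x ∧ π ∣ y - 1 := by
  have hx : π ∣ x := by
    refine hπ.dvd_of_dvd_pow (n := 2) ?_
    have : x ^ 2 = π * (1 - y ^ 2) + t * (c * t - x * y) := by
      unfold normForm at h; linear_combination h
    rw [this]
    exact dvd_add (dvd_mul_right π _) (hπt.mul_right _)
  obtain ⟨x, rfl⟩ := hx
  refine ⟨dvd_mul_right π x, hπ.dvd_of_dvd_pow (n := 2) ?_⟩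
  have : π * (y - 1) ^ 2 = c * t ^ 2 - π ^ 2 * x ^ 2 - t * π * (x * y) - 2 * π * (y - 1) := by
    unfold normForm at h; linear_combination h
  have hsq : π * π ∣ π * (y - 1) ^ 2 := by
    rw [this]
    refine dvd_sub (dvd_sub (dvd_sub ?_ ?_) ?_) ?_
    · exact (sq t ▸ mul_dvd_mul hπt hπt).mul_left c
    · exact sq π ▸ dvd_mul_right _ _
    · exact (mul_dvd_mul_right hπt π).mul_right _
    · exact (mul_dvd_mul_right hπ2 π).mul_right _
  exact (mul_dvd_mul_iff_left hπ.ne_zero).mp hsq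

end normForm

theorem Algebra.exists_norm_eq_normForm {F E : Type*} [Field F] [Field E] [Algebra F E]
    [FiniteDimensional F E] (hdeg : Module.finrank F E = 2) {t π : F} {ϖ : E}
    (hϖ : ϖ ^ 2 - algebraMap F E t * ϖ + algebraMap F E π = 0)
    (hgen : Algebra.adjoin F {ϖ} = ⊤) (b : E) :
    ∃ x y : F, Algebra.norm F b = normForm t π x y := by
  have hϖint : IsIntegral F ϖ := .of_finite F ϖ
  let pb : PowerBasis F E := (Algebra.adjoin.powerBasis hϖint).map
    ((Subalgebra.equivOfEq _ _ hgen).trans Subalgebra.topEquiv)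
  have hgen' : pb.gen = ϖ := by simp [pb, PowerBasis.map_gen, Algebra.adjoin.powerBasis_gen]
  let B : Module.Basis (Fin 2) F E := pb.basis.reindex (finCongr (by rw [← pb.finrank, hdeg]))
  have hB (i : Fin 2) : B i = ϖ ^ (i : ℕ) := by
    rw [Module.Basis.reindex_apply, PowerBasis.coe_basis, hgen']
    rfl
  have hB0 : B 0 = 1 := by simpa using hB 0
  have hB1 : B 1 = ϖ := by simpa using hB 1
  set x := B.repr b 0
  set y := B.repr b 1
  have hb : b = x • 1 + y • ϖ := by
    rw [← hB0, ← hB1, ← Fin.sum_univ_two (fun i => B.repr b i • B i), B.sum_repr]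
  have hbϖ : B.repr (b * ϖ) = Finsupp.single 0 (-(π * y)) + Finsupp.single 1 (x + t * y) := by
    have : b * ϖ = (-(π * y)) • B 0 + (x + t * y) • B 1 := by
      rw [hB0, hB1, hb]
      simp only [Algebra.smul_def, map_neg, map_mul, map_add]
      linear_combination (algebraMap F E y) * hϖ
    simp [this]
  refine ⟨x, y, ?_⟩
  rw [Algebra.norm_eq_matrix_det B, Matrix.det_fin_two]
  simp [Algebra.leftMulMatrix_eq_repr_mul, hB0, hB1, hbϖ, normForm, x, y]
  ring

lemma IsLocalRing.isUnit_one_add_of_not_isUnit {R : Type*} [CommRing R] [IsLocalRing R] {s : R}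
    (hs : ¬ IsUnit s) : IsUnit (1 + s) := by
  simpa using isUnit_one_sub_self_of_mem_nonunits (-s) (by simpa using hs)

lemma associated_add_of_sq_dvd {R : Type*} [CommRing R] [IsLocalRing R] {π r : R}
    (hπ : ¬ IsUnit π) (h : π ^ 2 ∣ r) : Associated π (π + r) := by
  obtain ⟨e, rfl⟩ := h
  have hu : IsUnit (1 + π * e) :=
    isUnit_one_add_of_not_isUnit fun h => hπ (isUnit_of_mul_isUnit_left h)
  exact ⟨hu.unit, by rw [hu.unit_spec]; ring⟩

section ValuationRing

variable {O : Type*} [CommRing O] [IsDomain O] [ValuationRing O] {π t : O}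

lemma Prime.isUnit_of_not_dvd (hπ : Prime π) {g : O} (h : ¬ π ∣ g) : IsUnit g := by
  obtain ⟨k, hk⟩ := (ValuationRing.dvd_total π g).resolve_left h
  obtain ⟨m, rfl⟩ := (hπ.dvd_or_dvd (dvd_of_eq hk)).resolve_left h
  refine IsUnit.of_mul_eq_one m (mul_left_cancel₀ hπ.ne_zero ?_)
  linear_combination -hk

lemma Prime.not_associated_sq_mul_sq (hπ : Prime π) (a : O) {b : O} (hb : b ≠ 0) :
    ¬ Associated (a ^ 2) (π * b ^ 2) := by
  intro h
  rcases ValuationRing.dvd_total a b with ⟨e, rfl⟩ | ⟨e, rfl⟩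
  · have ha : a ^ 2 ≠ 0 := pow_ne_zero 2 (left_ne_zero_of_mul hb)
    have : Associated 1 (π * e ^ 2) :=
      (show Associated (a ^ 2 * 1) (a ^ 2 * (π * e ^ 2)) by convert h using 1 <;> ring).of_mul_left
        (Associated.refl _) ha
    exact hπ.not_isUnit (isUnit_of_mul_isUnit_left (associated_one_iff_isUnit.mp this.symm))
  · have he : Associated (e ^ 2) π := by
      refine (show Associated (b ^ 2 * e ^ 2) (b ^ 2 * π) by convert h using 1 <;> ring).of_mul_left
        (Associated.refl _) (pow_ne_zero 2 hb)
    obtain ⟨f, rfl⟩ := hπ.dvd_of_dvd_pow he.symm.dvd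
    have : π * π ∣ π * 1 := by rw [mul_one]; exact (Dvd.intro (f ^ 2) (by ring)).trans he.dvd
    exact hπ.not_isUnit (isUnit_of_dvd_one ((mul_dvd_mul_iff_left hπ.ne_zero).mp this))

lemma sq_dvd_mul_add_two_or (d : O) (ht2 : t ∣ 2) :
    t ^ 2 ∣ d * (d + 2) ∨ ∃ u, IsUnit u ∧ d * (d + 2) = d ^ 2 * u := by
  rcases ValuationRing.dvd_total 2 d with ⟨e, rfl⟩ | ⟨s, hs⟩
  · exact .inl ((pow_dvd_pow_of_dvd ht2 2).trans ⟨e * (e + 1), by ring⟩)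
  have hd : d * (d + 2) = d ^ 2 * (1 + s) := by rw [hs]; ring
  by_cases hsu : IsUnit s
  · refine .inl (hd ▸ (pow_dvd_pow_of_dvd ?_ 2).mul_right _)
    exact (hsu.dvd_mul_right.mp (hs ▸ ht2))
  · exact .inr ⟨1 + s, isUnit_one_add_of_not_isUnit hsu, hd⟩

lemma Prime.dvd_of_sq_mul_eq (hπ : Prime π) {a g d : O} (ha : a ≠ 0) (hat : a ∣ t)
    (ht2 : t ∣ 2) (h : a ^ 2 * g = -(π * (d * (d + 2)))) : π ∣ g := by
  by_contra hg
  rcases sq_dvd_mul_add_two_or d ht2 with ⟨e, he⟩ | ⟨u, hu, hd⟩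
  · obtain ⟨k, rfl⟩ := hat
    refine hg ⟨-(k ^ 2 * e), mul_left_cancel₀ (pow_ne_zero 2 ha) ?_⟩
    rw [h, he]; ring
  · have hd0 : d ≠ 0 := by
      rintro rfl
      simp [ha, (hπ.isUnit_of_not_dvd hg).ne_zero] at h
    refine hπ.not_associated_sq_mul_sq a hd0 ?_
    calc Associated (a ^ 2) (a ^ 2 * g) := associated_mul_unit_right _ _ (hπ.isUnit_of_not_dvd hg)
      _ = π * d ^ 2 * -u := by rw [h, hd]; ring
      Associated _ (π * d ^ 2) := (associated_mul_unit_right _ _ hu.neg).symm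

theorem Prime.normForm_ne_add_mul_sq (hπ : Prime π) (hπt : π ∣ t) (ht2 : t ∣ 2)
    (h2 : (2 : O) ≠ 0) {c : O} (hc : ∀ ξ, ξ ^ 2 + ξ - c ∉ maximalIdeal O) (x y : O) :
    normForm t π x y ≠ π + c * t ^ 2 := by
  intro h
  obtain ⟨hx, d, hd, rfl⟩ : π ∣ x ∧ ∃ d, π ∣ d ∧ y = 1 + d :=
    have h' := hπ.dvd_and_dvd_sub_one_of_normForm_eq hπt (hπt.trans ht2) h
    ⟨h'.1, y - 1, h'.2, by ring⟩
  have key : x ^ 2 + t * x * (1 + d) - c * t ^ 2 = -(π * (d * (d + 2))) := by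
    unfold normForm at h; linear_combination h
  have ht0 : t ≠ 0 := by rintro rfl; exact h2 (zero_dvd_iff.mp ht2)
  by_cases htx : t ∣ x
  · obtain ⟨ξ, rfl⟩ := htx
    have hg : π ∣ ξ ^ 2 + ξ * (1 + d) - c :=
      hπ.dvd_of_sq_mul_eq (d := d) ht0 dvd_rfl ht2 (by linear_combination key)
    refine hc ξ (Ideal.mem_of_dvd _ ?_ ((mem_maximalIdeal π).mpr hπ.not_isUnit))
    have : ξ ^ 2 + ξ - c = (ξ ^ 2 + ξ * (1 + d) - c) - ξ * d := by ring
    exact this ▸ dvd_sub hg (hd.mul_left ξ)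
  · obtain ⟨s, rfl⟩ := (ValuationRing.dvd_total _ _).resolve_left htx
    have hs : ¬ IsUnit s := fun hs => htx ⟨↑hs.unit⁻¹, by rw [mul_assoc, hs.mul_val_inv, mul_one]⟩
    have hU : IsUnit (1 + s * (1 + d - c * s)) :=
      isUnit_one_add_of_not_isUnit fun h => hs (isUnit_of_mul_isUnit_left h)
    have hπU : π ∣ 1 + s * (1 + d - c * s) :=
      hπ.dvd_of_sq_mul_eq (d := d) (left_ne_zero_of_mul ht0) (dvd_mul_right x s) ht2
        (by linear_combination key)
    exact hπ.not_isUnit (isUnit_of_dvd_unit hπU hU)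

end ValuationRing

section DVR

variable {O : Type*} [CommRing O] [IsDomain O] [IsDiscreteValuationRing O] {π : O}
  (K : Type*) [Field K] [Algebra O K] [IsFractionRing O K]

lemma exists_isInteger_pow_mul (hπ : Irreducible π) (x : K) :
    ∃ n : ℕ, IsLocalization.IsInteger O (algebraMap O K π ^ n * x) := by
  obtain ⟨a, s, hs, rfl⟩ := IsFractionRing.div_surjective (A := O) x
  obtain ⟨n, u, rfl⟩ := IsDiscreteValuationRing.eq_unit_mul_pow_irreducible
    (nonZeroDivisors.ne_zero hs) hπ
  have hπK : algebraMap O K π ≠ 0 := by simpa using hπ.ne_zero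
  refine ⟨n, ↑u⁻¹ * a, ?_⟩
  simp only [map_mul, map_pow]
  field_simp
  rw [mul_right_comm, ← map_mul, Units.inv_mul, map_one, one_mul]

lemma isInteger_of_normForm_eq (hπ : Irreducible π) {t r : O} (hπt : π ∣ t) {x y : K}
    (h : normForm (algebraMap O K t) (algebraMap O K π) x y = algebraMap O K r) :
    IsLocalization.IsInteger O x ∧ IsLocalization.IsInteger O y := by
  have hπK : algebraMap O K π ≠ 0 := by simpa using hπ.ne_zero
  obtain ⟨N, ⟨a, ha⟩, ⟨b, hb⟩⟩ : ∃ N, IsLocalization.IsInteger O (algebraMap O K π ^ N * x) ∧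
      IsLocalization.IsInteger O (algebraMap O K π ^ N * y) := by
    obtain ⟨m, hm⟩ := exists_isInteger_pow_mul K hπ x
    obtain ⟨n, hn⟩ := exists_isInteger_pow_mul K hπ y
    refine ⟨m + n, ?_, ?_⟩
    · rw [pow_add, mul_comm (_ ^ m), mul_assoc]
      exact IsLocalization.isInteger_mul ⟨π ^ n, map_pow _ _ _⟩ hm
    · rw [pow_add, mul_assoc]
      exact IsLocalization.isInteger_mul ⟨π ^ m, map_pow _ _ _⟩ hn
  have hab : normForm t π a b = π ^ (2 * N) * r := by
    refine IsFractionRing.injective O K ?_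
    rw [map_normForm, ha, hb, normForm_mul_mul, h, map_mul, map_pow]
    ring
  obtain ⟨⟨e, rfl⟩, ⟨f, rfl⟩⟩ := hπ.prime.pow_dvd_of_normForm_eq_pow_mul hπt r N hab
  have hπN := pow_ne_zero N hπK
  refine ⟨⟨e, mul_left_cancel₀ hπN ?_⟩, ⟨f, mul_left_cancel₀ hπN ?_⟩⟩
  · rw [← ha, map_mul, map_pow]
  · rw [← hb, map_mul, map_pow]

end DVR

lemma isDiscreteValuationRing_of_maximalIdeal_eq_span {R : Type*} [CommRing R] [IsDomain R]
    [IsNoetherianRing R] [IsLocalRing R] {π : R} (hπ : maximalIdeal R = Ideal.span {π})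
    (hπ0 : π ≠ 0) : IsDiscreteValuationRing R := by
  have hR : ¬ IsField R := by
    rw [isField_iff_maximalIdeal_eq, hπ, Ideal.span_singleton_eq_bot]
    exact hπ0
  have := (IsDiscreteValuationRing.TFAE R hR).out 0 4
  exact this.mpr ⟨π, hπ⟩

lemma exists_forall_sq_add_self_ne {k : Type*} [Ring k] [Nontrivial k] [Finite k]
    (h2 : (2 : k) = 0) : ∃ γ : k, ∀ σ, σ ^ 2 + σ ≠ γ := by
  by_contra! h
  have hinj : Function.Injective fun σ : k => σ ^ 2 + σ := Finite.injective_iff_surjective.mpr h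
  exact one_ne_zero (hinj (show (1 : k) ^ 2 + 1 = 0 ^ 2 + 0 by simp [one_add_one_eq_two, h2]))

lemma exists_forall_sq_add_sub_notMem_maximalIdeal {R : Type*} [CommRing R] [IsLocalRing R]
    [Finite (ResidueField R)] (h2 : (2 : R) ∈ maximalIdeal R) :
    ∃ c : R, ∀ ξ, ξ ^ 2 + ξ - c ∉ maximalIdeal R := by
  obtain ⟨γ, hγ⟩ := exists_forall_sq_add_self_ne (k := ResidueField R)
    (by rw [← map_ofNat (residue R) 2]; exact (residue_eq_zero_iff 2).mpr h2)
  obtain ⟨c, rfl⟩ := residue_surjective γ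
  refine ⟨c, fun ξ hξ => hγ (residue R ξ) ?_⟩
  have := (residue_eq_zero_iff _).mpr hξ
  simp only [map_sub, map_add, map_pow] at this
  linear_combination this

section PadicIntegralClosure

variable (p : ℕ) [Fact p.Prime] (F : Type*) [Field F] [Algebra ℚ_[p] F]
  [FiniteDimensional ℚ_[p] F] [Algebra ℤ_[p] F] [IsScalarTower ℤ_[p] ℚ_[p] F]

instance : FaithfulSMul ℤ_[p] (integralClosure ℤ_[p] F) :=
  have : FaithfulSMul ℤ_[p] F := .trans ℤ_[p] ℚ_[p] F
  .tower_bot ℤ_[p] (integralClosure ℤ_[p] F) F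

instance : CharZero (integralClosure ℤ_[p] F) :=
  charZero_of_injective_algebraMap (FaithfulSMul.algebraMap_injective ℤ_[p] _)

instance : IsFractionRing (integralClosure ℤ_[p] F) F :=
  integralClosure.isFractionRing_of_finite_extension ℚ_[p] F

instance : Module.Finite ℤ_[p] (integralClosure ℤ_[p] F) :=
  IsIntegralClosure.finite ℤ_[p] ℚ_[p] F _

instance : IsNoetherianRing (integralClosure ℤ_[p] F) :=
  IsIntegralClosure.isNoetherianRing ℤ_[p] ℚ_[p] F _

lemma finite_residueField_integralClosure [IsLocalRing (integralClosure ℤ_[p] F)] :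
    Finite (ResidueField (integralClosure ℤ_[p] F)) :=
  ResidueField.finite_of_finite (.of_equiv _ (PadicInt.residueField (p := p)).symm.toEquiv)

end PadicIntegralClosure

/-- **Existence of a non-norm uniformizer for an (R-U) extension.**
Let `F` be a finite extension of `ℚ₂` with ring of integers `O_F` and uniformizer `π₀`,
and let `E|F` be a ramified quadratic extension of type (R-U): `E = F(Π)` where
`Π² − t·Π + π₀ = 0` for some `t ∈ O_F` with `π₀ ∣ t` and `t ∣ 2`.  Then there exists a
uniformizer `π₁` of `O_F` that is not a norm from `E`: for every `b ∈ E` one has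
`N_{E|F}(b) ≠ π₁`. -/
theorem exists_nonnorm_uniformizer_RU
    (F : Type*) [Field F] [Algebra ℚ_[2] F] [FiniteDimensional ℚ_[2] F]
    [Algebra ℤ_[2] F] [IsScalarTower ℤ_[2] ℚ_[2] F]
    [IsLocalRing (integralClosure ℤ_[2] F)]
    (π₀ t : integralClosure ℤ_[2] F)
    (hπ₀ : IsLocalRing.maximalIdeal (integralClosure ℤ_[2] F) = Ideal.span {π₀})
    (hπt : π₀ ∣ t) (ht2 : t ∣ 2)
    (E : Type*) [Field E] [Algebra F E] [FiniteDimensional F E]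
    (hdeg : Module.finrank F E = 2)
    (ϖ : E)
    (hϖ : ϖ ^ 2 - algebraMap F E (t : F) * ϖ + algebraMap F E (π₀ : F) = 0)
    (hgen : Algebra.adjoin F {ϖ} = ⊤) :
    ∃ π₁ : integralClosure ℤ_[2] F,
      IsLocalRing.maximalIdeal (integralClosure ℤ_[2] F) = Ideal.span {π₁} ∧
      ∀ b : E, Algebra.norm F b ≠ (π₁ : F) := by
  have h2 : (2 : integralClosure ℤ_[2] F) ≠ 0 := two_ne_zero
  have hπ₀0 : π₀ ≠ 0 := by rintro rfl; exact h2 (zero_dvd_iff.mp (hπt.trans ht2))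
  have := isDiscreteValuationRing_of_maximalIdeal_eq_span hπ₀ hπ₀0
  have hπ : Irreducible π₀ := (IsDiscreteValuationRing.irreducible_iff_uniformizer π₀).mpr hπ₀
  have := finite_residueField_integralClosure 2 F
  obtain ⟨c, hc⟩ := exists_forall_sq_add_sub_notMem_maximalIdeal
    (hπ₀ ▸ Ideal.mem_span_singleton.mpr (hπt.trans ht2))
  refine ⟨π₀ + c * t ^ 2, hπ₀.trans (Ideal.span_singleton_eq_span_singleton.mpr
    (associated_add_of_sq_dvd hπ.not_isUnit ((pow_dvd_pow_of_dvd hπt 2).mul_left c))), ?_⟩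
  intro b hb
  obtain ⟨x, y, hxy⟩ := Algebra.exists_norm_eq_normForm hdeg hϖ hgen b
  have hxy' : normForm (algebraMap _ F t) (algebraMap _ F π₀) x y =
      algebraMap _ F (π₀ + c * t ^ 2) := hxy.symm.trans hb
  obtain ⟨⟨x, rfl⟩, ⟨y, rfl⟩⟩ := isInteger_of_normForm_eq F hπ hπt hxy'
  rw [← map_normForm] at hxy'
  exact hπ.prime.normForm_ne_add_mul_sq hπt ht2 h2 hc x y (IsFractionRing.injective _ F hxy')
end

section
/- Let E|F be a ramified quadratic extension of type (R-U), and let u ∈ O_F^× be a unit such that the polynomial X² − X − u has no root modulo π₀ (i.e. for every c ∈ O_F, π₀ does not divide c² − c − u). Then the element 1 + (t²/π₀)·u of O_F (note t²/π₀ ∈ O_F since π₀ ∣ t) is not a norm from E: for every b ∈ E one has N_{E|F}(b) ≠ 1 + (t²/π₀)·u. -/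
set_option synthInstance.maxHeartbeats 1000000
set_option maxHeartbeats 2000000



private lemma dvd_of_pow_mul_dvd_RU {R : Type*} [CommRing R] [IsDomain R] {π : R} (hπ : π ≠ 0)
    (k : ℕ) {a : R} (h : π ^ (k + 1) ∣ π ^ k * a) : π ∣ a := by
  obtain ⟨q, hq⟩ := h
  refine ⟨q, mul_left_cancel₀ (pow_ne_zero k hπ) ?_⟩
  rw [hq, pow_succ]; ring

lemma core_RU {R : Type*} [CommRing R] [IsDomain R] (π₀ t s u : R)
    (hprime : Prime π₀) (d' : ℕ) (w : R) (hw : IsUnit w) (htw : t = w * π₀ ^ (d' + 1))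
    (r : R) (hr : (2 : R) = t * r) (hs : π₀ * s = t ^ 2)
    (hnoroot : ∀ c : R, ¬ π₀ ∣ (c ^ 2 - c - u)) :
    ∀ (n : ℕ) (X Y : R), X ^ 2 + t * X * Y + π₀ * Y ^ 2 ≠ π₀ ^ (2 * n) * (1 + s * u) := by
  have hπ0 : π₀ ≠ 0 := hprime.ne_zero
  have ht0 : t ≠ 0 := by
    rw [htw]; exact mul_ne_zero hw.ne_zero (pow_ne_zero _ hπ0)
  obtain ⟨W, hW⟩ := hw
  have hsval : s = w ^ 2 * π₀ ^ (2 * d' + 1) := by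
    have hpp : π₀ ^ ((d' + 1) * 2) = π₀ * π₀ ^ (2 * d' + 1) := by
      rw [← pow_succ']; congr 1; omega
    refine mul_left_cancel₀ hπ0 ?_
    rw [hs, htw, mul_pow, ← pow_mul, hpp]; ring
  have hsu : π₀ ^ (2 * d' + 1) ∣ s * u := ⟨w ^ 2 * u, by rw [hsval]; ring⟩
  have hπ1t : π₀ ∣ t := ⟨w * π₀ ^ d', by rw [htw, pow_succ]; ring⟩
  intro n
  induction n with
  | zero =>
    intro X Y heq
    rw [pow_zero, one_mul] at heq
    set e := X - 1 with he
    have heq' : e ^ 2 + 2 * e + t * X * Y + π₀ * Y ^ 2 = s * u := by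
      rw [he]; linear_combination heq
    have key : ∀ j, j ≤ d' → π₀ ^ (j + 1) ∣ e ∧ π₀ ^ (j + 1) ∣ π₀ * Y := by
      intro j hjd
      induction j with
      | zero =>
        rw [pow_one]
        refine ⟨hprime.dvd_of_dvd_pow (n := 2) ?_, dvd_mul_right _ _⟩
        have h2 : e ^ 2 = s * u - 2 * e - t * X * Y - π₀ * Y ^ 2 := by
          linear_combination heq'
        rw [h2]
        refine dvd_sub (dvd_sub (dvd_sub ?_ ?_) ?_) (dvd_mul_right _ _)
        · exact (dvd_pow_self π₀ (by omega : 2 * d' + 1 ≠ 0)).trans hsu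
        · rw [hr]; exact (hπ1t.mul_right r).mul_right e
        · exact (hπ1t.mul_right X).mul_right Y
      | succ j ih =>
        obtain ⟨ihe, ihY⟩ := ih (by omega)
        obtain ⟨e₁, he₁⟩ := ihe
        obtain ⟨Y₁, hY₁⟩ : π₀ ^ j ∣ Y := by
          obtain ⟨Z, hZ⟩ := ihY
          refine ⟨Z, mul_left_cancel₀ hπ0 ?_⟩
          rw [hZ, pow_succ]; ring
        have h2e : π₀ ^ ((d' + 1) + (j + 1)) ∣ 2 * e :=
          ⟨w * r * e₁, by rw [hr, he₁, htw, pow_add π₀ (d' + 1) (j + 1)]; ring⟩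
        have he2 : π₀ ^ ((j + 1) + (j + 1)) ∣ e ^ 2 :=
          ⟨e₁ ^ 2, by rw [he₁, pow_add π₀ (j + 1) (j + 1)]; ring⟩
        have htXY : π₀ ^ ((d' + 1) + j) ∣ t * X * Y :=
          ⟨w * X * Y₁, by rw [htw, hY₁, pow_add π₀ (d' + 1) j]; ring⟩
        have h2j : π₀ ^ (2 * j + 2) ∣ π₀ * Y ^ 2 := by
          have h3 : π₀ * Y ^ 2 = s * u - e ^ 2 - 2 * e - t * X * Y := by
            linear_combination heq'
          rw [h3]
          refine dvd_sub (dvd_sub (dvd_sub ?_ ?_) ?_) ?_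
          · exact (pow_dvd_pow π₀ (by omega)).trans hsu
          · exact (pow_dvd_pow π₀ (by omega)).trans he2
          · exact (pow_dvd_pow π₀ (by omega)).trans h2e
          · exact (pow_dvd_pow π₀ (by omega)).trans htXY
        have hY1dvd : π₀ ∣ Y₁ := by
          refine hprime.dvd_of_dvd_pow (n := 2) (dvd_of_pow_mul_dvd_RU hπ0 (j + j + 1) ?_)
          have h4 : π₀ ^ (j + j + 1) * Y₁ ^ 2 = π₀ * Y ^ 2 := by
            rw [hY₁, pow_add π₀ (j + j) 1, pow_add π₀ j j]; ring
          rw [h4]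
          exact (pow_dvd_pow π₀ (by omega)).trans h2j
        obtain ⟨Y₂, hY₂⟩ := hY1dvd
        have hYnew : π₀ ^ (j + 1) ∣ Y := ⟨Y₂, by rw [hY₁, hY₂, pow_succ π₀ j]; ring⟩
        obtain ⟨q, hq⟩ := hYnew
        have hYgoal : π₀ ^ (j + 1 + 1) ∣ π₀ * Y :=
          ⟨q, by rw [hq, pow_succ' π₀ (j + 1)]; ring⟩
        refine ⟨?_, hYgoal⟩
        have he2' : π₀ ^ (2 * j + 3) ∣ e ^ 2 := by
          have h3 : e ^ 2 = s * u - 2 * e - t * X * Y - π₀ * Y ^ 2 := by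
            linear_combination heq'
          rw [h3]
          refine dvd_sub (dvd_sub (dvd_sub ?_ ?_) ?_) ?_
          · exact (pow_dvd_pow π₀ (by omega)).trans hsu
          · exact (pow_dvd_pow π₀ (by omega)).trans h2e
          · refine (pow_dvd_pow π₀ (by omega : 2 * j + 3 ≤ (d' + 1) + (j + 1))).trans
              ⟨w * X * Y₂, ?_⟩
            rw [htw, hY₁, hY₂, pow_add π₀ (d' + 1) (j + 1), pow_succ π₀ j]; ring
          · have hpe : π₀ ^ (2 * j + 3) = π₀ * (π₀ ^ (j + 1) * π₀ ^ (j + 1)) := by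
              rw [← pow_add π₀ (j + 1) (j + 1), ← pow_succ']; congr 1; omega
            exact ⟨q ^ 2, by rw [hq, hpe]; ring⟩
        have he1dvd : π₀ ∣ e₁ := by
          refine hprime.dvd_of_dvd_pow (n := 2)
            (dvd_of_pow_mul_dvd_RU hπ0 ((j + 1) + (j + 1)) ?_)
          have h4 : π₀ ^ ((j + 1) + (j + 1)) * e₁ ^ 2 = e ^ 2 := by
            rw [he₁, pow_add π₀ (j + 1) (j + 1)]; ring
          rw [h4]
          exact (pow_dvd_pow π₀ (by omega)).trans he2'
        obtain ⟨e₂, he₂⟩ := he1dvd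
        exact ⟨e₂, by rw [he₁, he₂, pow_succ π₀ (j + 1)]; ring⟩
    obtain ⟨hte, htY⟩ := key d' le_rfl
    have hWw : w * (↑W⁻¹ : R) = 1 := by rw [← hW]; exact_mod_cast W.mul_inv
    have hte' : t ∣ e := by
      obtain ⟨q, hq⟩ := hte
      refine ⟨(↑W⁻¹ : R) * q, ?_⟩
      rw [hq, htw]
      linear_combination (-(π₀ ^ (d' + 1) * q)) * hWw
    have htY' : t ∣ π₀ * Y := by
      obtain ⟨q, hq⟩ := htY
      refine ⟨(↑W⁻¹ : R) * q, ?_⟩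
      rw [hq, htw]
      linear_combination (-(π₀ ^ (d' + 1) * q)) * hWw
    obtain ⟨g₁, hg₁⟩ := hte'
    obtain ⟨m, hm⟩ := htY'
    have hc : π₀ * X * Y = t * (X * m) := by linear_combination X * hm
    have hX : X = t * g₁ + 1 := by linear_combination hg₁ - he
    have hg : X ^ 2 - 1 = t ^ 2 * (g₁ * (g₁ + r)) := by
      rw [hX]; linear_combination (t * g₁) * hr
    set c := X * m with hcdef
    set g := g₁ * (g₁ + r) with hgdef
    have hfinal : t ^ 2 * (c ^ 2 - c - u) =
        t ^ 2 * (π₀ * (g * (π₀ * Y ^ 2 - 1) - r * X * Y)) := by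
      linear_combination (-(t * c + π₀ * X * Y)) * hc + t * hc + u * hs + π₀ * heq
        + (π₀ ^ 2 * Y ^ 2 - π₀) * hg - π₀ * t * X * Y * hr
    have := mul_left_cancel₀ (pow_ne_zero 2 ht0) hfinal
    exact hnoroot c ⟨_, this⟩
  | succ n ih =>
    intro X Y heq
    have hXd : π₀ ∣ X := by
      refine hprime.dvd_of_dvd_pow (n := 2) ?_
      have h2 : X ^ 2 = π₀ ^ (2 * (n + 1)) * (1 + s * u) - t * X * Y - π₀ * Y ^ 2 := by
        linear_combination heq
      rw [h2]
      refine dvd_sub (dvd_sub ?_ ?_) (dvd_mul_right _ _)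
      · exact (dvd_pow_self π₀ (by omega : 2 * (n + 1) ≠ 0)).mul_right _
      · exact (hπ1t.mul_right X).mul_right Y
    obtain ⟨X₁, hX₁⟩ := hXd
    have hYd : π₀ ∣ Y := by
      refine hprime.dvd_of_dvd_pow (n := 2) (dvd_of_pow_mul_dvd_RU hπ0 1 ?_)
      have h2 : π₀ ^ 1 * Y ^ 2 = π₀ ^ (2 * (n + 1)) * (1 + s * u) - π₀ ^ 2 * X₁ ^ 2
          - t * π₀ * X₁ * Y := by
        rw [pow_one]; linear_combination heq - (X + π₀ * X₁ + t * Y) * hX₁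
      rw [h2]
      obtain ⟨r₁, hr₁⟩ := hπ1t
      refine dvd_sub (dvd_sub ?_ ⟨X₁ ^ 2, rfl⟩) ⟨r₁ * X₁ * Y, by rw [hr₁]; ring⟩
      exact (pow_dvd_pow π₀ (by omega)).mul_right _
    obtain ⟨Y₁, hY₁⟩ := hYd
    refine ih X₁ Y₁ (mul_left_cancel₀ (pow_ne_zero 2 hπ0) ?_)
    have hsp : π₀ ^ (2 * (n + 1)) = π₀ ^ 2 * π₀ ^ (2 * n) := by
      rw [← pow_add π₀ 2 (2 * n)]; congr 1; omega
    rw [hX₁, hY₁] at heq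
    linear_combination heq + (1 + s * u) * hsp

/-- **`1 + (t²/π₀)·u` is not a norm from an (R-U) extension.**
Let `F` be a finite extension of `ℚ₂` with ring of integers `O_F` and uniformizer `π₀`,
and let `E|F` be a ramified quadratic extension of type (R-U): `E = F(Π)` where
`Π² − t·Π + π₀ = 0` for some `t ∈ O_F` with `π₀ ∣ t` and `t ∣ 2`.  Let `u ∈ O_F^×` be a
unit such that `X² − X − u` has no root modulo `π₀`.  Then the element `1 + (t²/π₀)·u` of
`O_F` (here `s = t²/π₀ ∈ O_F`, i.e. `π₀·s = t²`) is not a norm from `E`: for every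
`b ∈ E` one has `N_{E|F}(b) ≠ 1 + (t²/π₀)·u`. -/
theorem one_add_t_sq_div_pi_mul_u_not_norm_RU
    (F : Type*) [Field F] [Algebra ℚ_[2] F] [FiniteDimensional ℚ_[2] F]
    [Algebra ℤ_[2] F] [IsScalarTower ℤ_[2] ℚ_[2] F]
    [IsLocalRing (integralClosure ℤ_[2] F)]
    (π₀ t : integralClosure ℤ_[2] F)
    (hπ₀ : IsLocalRing.maximalIdeal (integralClosure ℤ_[2] F) = Ideal.span {π₀})
    (hπt : π₀ ∣ t) (ht2 : t ∣ 2)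
    (E : Type*) [Field E] [Algebra F E] [FiniteDimensional F E]
    (hdeg : Module.finrank F E = 2)
    (ϖ : E)
    (hϖ : ϖ ^ 2 - algebraMap F E (t : F) * ϖ + algebraMap F E (π₀ : F) = 0)
    (hgen : Algebra.adjoin F {ϖ} = ⊤)
    (u : integralClosure ℤ_[2] F) (hu : IsUnit u)
    (hnoroot : ∀ c : integralClosure ℤ_[2] F, ¬ (π₀ ∣ (c ^ 2 - c - u)))
    (s : integralClosure ℤ_[2] F) (hs : π₀ * s = t ^ 2) :
    ∀ b : E, Algebra.norm F b ≠ ((1 + s * u : integralClosure ℤ_[2] F) : F) := by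
  
  intro b hb
  haveI : CharZero F := charZero_of_injective_algebraMap (algebraMap ℚ_[2] F).injective
  -- ring-theoretic setup on O := integralClosure ℤ_[2] F
  have h2F : ((2 : integralClosure ℤ_[2] F) : F) = (2 : F) := by norm_cast
  have h20 : (2 : integralClosure ℤ_[2] F) ≠ 0 := by
    intro h
    rw [h] at h2F
    push_cast at h2F
    norm_num at h2F
  have ht0 : t ≠ 0 := by rintro rfl; exact h20 (zero_dvd_iff.mp ht2)
  have hπ0 : π₀ ≠ 0 := by rintro rfl; exact ht0 (zero_dvd_iff.mp hπt)
  have hprime : Prime π₀ := by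
    rw [← Ideal.span_singleton_prime hπ0, ← hπ₀]
    exact (IsLocalRing.maximalIdeal.isMaximal _).isPrime
  haveI hnoe : IsNoetherianRing (integralClosure ℤ_[2] F) :=
    IsIntegralClosure.isNoetherianRing ℤ_[2] ℚ_[2] F (integralClosure ℤ_[2] F)
  have hnf : ¬ IsField (integralClosure ℤ_[2] F) := by
    rw [IsLocalRing.isField_iff_maximalIdeal_eq, hπ₀]
    intro h
    exact hπ0 (Ideal.span_singleton_eq_bot.mp h)
  haveI hdvr : IsDiscreteValuationRing (integralClosure ℤ_[2] F) := by
    have hp : (IsLocalRing.maximalIdeal (integralClosure ℤ_[2] F)).IsPrincipal := ⟨⟨π₀, hπ₀⟩⟩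
    exact ((IsDiscreteValuationRing.TFAE (integralClosure ℤ_[2] F) hnf).out 0 4).mpr hp
  haveI hfr : IsFractionRing (integralClosure ℤ_[2] F) F :=
    integralClosure.isFractionRing_of_finite_extension ℚ_[2] F
  have hirr : Irreducible π₀ := hprime.irreducible
  obtain ⟨dd, hdd⟩ := IsDiscreteValuationRing.associated_pow_irreducible ht0 hirr
  obtain ⟨V, hV⟩ := hdd.symm
  have hdd0 : dd ≠ 0 := by
    rintro rfl
    rw [pow_zero, one_mul] at hV
    exact hirr.not_isUnit (isUnit_of_dvd_unit hπt (hV ▸ V.isUnit))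
  obtain ⟨d', rfl⟩ : ∃ d', dd = d' + 1 := ⟨dd - 1, by omega⟩
  have htw : t = (V : integralClosure ℤ_[2] F) * π₀ ^ (d' + 1) := by rw [← hV]; ring
  obtain ⟨r, hr⟩ := ht2
  -- denominators
  have hdenom : ∀ z : F, ∃ (k : ℕ) (X : integralClosure ℤ_[2] F),
      (X : F) = (π₀ : F) ^ k * z := by
    intro z
    obtain ⟨a, y, hy, hxy⟩ := IsFractionRing.div_surjective (A := integralClosure ℤ_[2] F) z
    have hy0 : y ≠ 0 := nonZeroDivisors.ne_zero hy
    obtain ⟨k, hk⟩ := IsDiscreteValuationRing.associated_pow_irreducible hy0 hirr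
    obtain ⟨v, hv⟩ := hk
    refine ⟨k, a * v, ?_⟩
    have hyF : (y : F) ≠ 0 := fun h => hy0 (by exact_mod_cast h)
    have hvF : ((y : F)) * ((v : Units (integralClosure ℤ_[2] F)) : F) = (π₀ : F) ^ k := by
      exact_mod_cast congrArg (fun w : integralClosure ℤ_[2] F => (w : F)) hv
    have hxy' : (a : F) / (y : F) = z := hxy
    push_cast
    rw [← hxy']
    field_simp
    linear_combination (a : F) * hvF
  -- the basis {1, ϖ} and the norm form
  have hnot : ∀ a : F, algebraMap F E a ≠ ϖ := by
    intro a ha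
    have hle : Algebra.adjoin F {ϖ} ≤ ⊥ := by
      apply Algebra.adjoin_le
      intro z hz
      rw [Set.mem_singleton_iff] at hz
      subst hz
      rw [SetLike.mem_coe, Algebra.mem_bot]
      exact ⟨a, ha⟩
    rw [hgen, top_le_iff] at hle
    have := Subalgebra.bot_eq_top_iff_finrank_eq_one.mp hle
    omega
  have hϖ0 : ϖ ≠ 0 := fun h => hnot 0 (by simp [h])
  have hli : LinearIndependent F ![(1 : E), ϖ] := by
    rw [linearIndependent_fin2]
    refine ⟨by simpa using hϖ0, fun a ha => ?_⟩
    simp only [Matrix.cons_val_one, Matrix.head_cons, Matrix.cons_val_zero] at ha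
    have ha0 : a ≠ 0 := by rintro rfl; simp at ha
    apply hnot a⁻¹
    rw [Algebra.algebraMap_eq_smul_one, ← ha, smul_smul, inv_mul_cancel₀ ha0, one_smul]
  have hcard : Fintype.card (Fin 2) = Module.finrank F E := by simp [hdeg]
  let B : Module.Basis (Fin 2) F E := basisOfLinearIndependentOfCardEqFinrank hli hcard
  have hB0 : B 0 = 1 := by simp [B]
  have hB1 : B 1 = ϖ := by simp [B]
  set x := B.repr b 0 with hx
  set y := B.repr b 1 with hy
  have hbxy : b = x • (1 : E) + y • ϖ := by
    have h := B.sum_repr b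
    rw [Fin.sum_univ_two, hB0, hB1] at h
    exact h.symm
  have hcoord : ∀ (a c : F) (i : Fin 2), B.repr (a • (1 : E) + c • ϖ) i = ![a, c] i := by
    intro a c i
    rw [← hB0, ← hB1]
    rw [map_add, map_smul, map_smul, B.repr_self, B.repr_self]
    fin_cases i <;> simp
  have hbϖ : b * ϖ = (-((π₀ : F) * y)) • (1 : E) + (x + (t : F) * y) • ϖ := by
    rw [hbxy]
    simp only [Algebra.smul_def, map_add, map_mul, map_neg]
    linear_combination algebraMap F E y * hϖ
  have hnormxy : Algebra.norm F b = x ^ 2 + (t : F) * x * y + (π₀ : F) * y ^ 2 := by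
    rw [Algebra.norm_eq_matrix_det B]
    rw [Matrix.det_fin_two]
    rw [Algebra.leftMulMatrix_eq_repr_mul, Algebra.leftMulMatrix_eq_repr_mul,
      Algebra.leftMulMatrix_eq_repr_mul, Algebra.leftMulMatrix_eq_repr_mul]
    rw [hB0, hB1, mul_one, hbϖ, hcoord, hcoord]
    rw [← hx, ← hy]
    simp only [Matrix.cons_val_zero, Matrix.cons_val_one, Matrix.head_cons]
    ring
  have hxyeq : x ^ 2 + (t : F) * x * y + (π₀ : F) * y ^ 2
      = ((1 + s * u : integralClosure ℤ_[2] F) : F) := by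
    rw [← hnormxy]; exact hb
  -- clear denominators and conclude with core_RU
  obtain ⟨k₁, Z₁, hZ₁⟩ := hdenom x
  obtain ⟨k₂, Z₂, hZ₂⟩ := hdenom y
  have key := core_RU π₀ t s u hprime d' (V : integralClosure ℤ_[2] F) V.isUnit htw r hr hs
    hnoroot (k₁ + k₂) (Z₁ * π₀ ^ k₂) (Z₂ * π₀ ^ k₁)
  apply key
  apply Subtype.coe_injective
  push_cast
  rw [hZ₁, hZ₂]
  push_cast at hxyeq
  linear_combination ((π₀ : F)) ^ (2 * (k₁ + k₂)) * hxyeq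
end

section
/- Let E|F be of type (R-P) and (C,h) a split 2-dimensional E|F-hermitian space. A selfdual lattice Λ ⊆ C is hyperbolic if and only if Nm(Λ) = 2·O_F, and likewise a Π⁻¹-modular lattice Λ is hyperbolic if and only if Nm(Λ) = 2·O_F. Moreover this norm ideal is minimal: every selfdual lattice and every Π⁻¹-modular lattice Λ satisfies 2·O_F ⊆ Nm(Λ). -/
open scoped Pointwise

set_option synthInstance.maxHeartbeats 1000000
set_option maxHeartbeats 4000000

noncomputable section

variable {E : Type*} [Field E] {C : Type*} [AddCommGroup C] [Module E C]

/-- A lattice in `C`: a finitely generated `O_E`-submodule containing an `E`-basis. -/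
def IsLattice (OE : Subring E) (Λ : Submodule OE C) : Prop :=
  Λ.FG ∧ Submodule.span E (Λ : Set C) = ⊤

/-- The dual of a lattice with respect to the hermitian form `h`. -/
def hermDual (OE : Subring E) (h : C → C → E) (Λ : Submodule OE C) : Set C :=
  {x | ∀ y ∈ Λ, h x y ∈ OE}

/-- A lattice is selfdual (unimodular) if it equals its dual. -/
def IsSelfdual (OE : Subring E) (h : C → C → E) (Λ : Submodule OE C) : Prop :=
  (Λ : Set C) = hermDual OE h Λ

/-- A lattice is `c`-modular (e.g. `Π⁻¹`-modular) if it equals `c` times its dual. -/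
def IsModular (c : E) (OE : Subring E) (h : C → C → E) (Λ : Submodule OE C) : Prop :=
  (Λ : Set C) = c • hermDual OE h Λ

/-- A lattice is hyperbolic if it has an `O_E`-basis consisting of isotropic vectors. -/
def IsHyperbolic (OE : Subring E) (h : C → C → E) (Λ : Submodule OE C) : Prop :=
  ∃ b : Module.Basis (Fin 2) OE Λ, h (b 0 : C) (b 0 : C) = 0 ∧ h (b 1 : C) (b 1 : C) = 0

/-- The norm ideal `Nm(Λ)`: the `O_F`-submodule of `F` generated by the elements
`h(x,x)`, `x ∈ Λ` (which lie in `F ⊆ E`). -/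
def normIdeal (F : Type*) [Field F] [Algebra ℤ_[2] F] [Algebra F E]
    {OE : Subring E} (h : C → C → E) (Λ : Submodule OE C) :
    Submodule (integralClosure ℤ_[2] F) F :=
  Submodule.span (integralClosure ℤ_[2] F) {a : F | ∃ x ∈ Λ, algebraMap F E a = h x x}

set_option linter.unusedSectionVars false
set_option maxHeartbeats 1000000
set_option synthInstance.maxHeartbeats 1000000
namespace RPaux
section A
variable {F : Type*} [Field F] [Algebra ℚ_[2] F]

lemma charZeroF : CharZero F :=
  charZero_of_injective_algebraMap (algebraMap ℚ_[2] F).injective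

lemma charZeroE {E : Type*} [Field E] [Algebra F E] : CharZero E := by
  haveI := charZeroF (F := F)
  exact charZero_of_injective_algebraMap (algebraMap F E).injective

end A
variable {F : Type*} [Field F] [Algebra ℚ_[2] F]
  [Algebra ℤ_[2] F] [IsScalarTower ℤ_[2] ℚ_[2] F]

lemma two_not_unit : ¬ IsUnit (2 : integralClosure ℤ_[2] F) := by
  haveI := charZeroF (F := F)
  rintro hu
  obtain ⟨u, hu⟩ := hu
  have h1 : ((↑u⁻¹ : integralClosure ℤ_[2] F) : F) * 2 = 1 := by
    have := congrArg (fun z : integralClosure ℤ_[2] F => ((↑u⁻¹ * z : _) : F)) hu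
    simp at this
    rw [show ((2 : integralClosure ℤ_[2] F) : F) = 2 from rfl] at this
    linear_combination -this
  have h2 : ((↑u⁻¹ : integralClosure ℤ_[2] F) : F) = algebraMap ℚ_[2] F ((2:ℚ_[2])⁻¹) := by
    rw [map_inv₀, map_ofNat]
    exact (inv_eq_of_mul_eq_one_right (by linear_combination h1)).symm
  have hint : IsIntegral ℤ_[2] ((2:ℚ_[2])⁻¹) := by
    have h3 : IsIntegral ℤ_[2] ((↑u⁻¹ : integralClosure ℤ_[2] F) : F) :=
      (↑u⁻¹ : integralClosure ℤ_[2] F).2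
    rw [h2] at h3
    rwa [isIntegral_algebraMap_iff (algebraMap ℚ_[2] F).injective] at h3
  rw [IsIntegrallyClosed.isIntegral_iff] at hint
  obtain ⟨y, hy⟩ := hint
  have hy' : (y : ℚ_[2]) = (2:ℚ_[2])⁻¹ := hy
  have hl : ‖(y : ℚ_[2])‖ ≤ 1 := y.norm_le_one
  rw [hy', norm_inv] at hl
  have : ‖(2:ℚ_[2])‖ = 1/2 := by simpa using Padic.norm_p (p := 2)
  rw [this] at hl; norm_num at hl
end RPaux

namespace RPaux2
variable {F : Type*} [Field F] [Algebra ℚ_[2] F]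
  [Algebra ℤ_[2] F] [IsScalarTower ℤ_[2] ℚ_[2] F]
  [IsLocalRing (integralClosure ℤ_[2] F)]
variable {E : Type*} [Field E] [Algebra F E]
open RPaux

lemma mem_m_iff {π₀ x : integralClosure ℤ_[2] F}
    (hπ₀ : IsLocalRing.maximalIdeal (integralClosure ℤ_[2] F) = Ideal.span {π₀}) :
    (¬ IsUnit x) ↔ ∃ s, x = π₀ * s := by
  rw [← mem_nonunits_iff, ← IsLocalRing.mem_maximalIdeal, hπ₀, Ideal.mem_span_singleton]
  exact ⟨fun ⟨s, hs⟩ => ⟨s, hs⟩, fun ⟨s, hs⟩ => ⟨s, hs⟩⟩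

lemma two_eq_pi_mul {π₀ : integralClosure ℤ_[2] F}
    (hπ₀ : IsLocalRing.maximalIdeal (integralClosure ℤ_[2] F) = Ideal.span {π₀}) :
    ∃ s, (2 : integralClosure ℤ_[2] F) = π₀ * s :=
  (mem_m_iff hπ₀).mp two_not_unit

lemma pi_not_unit {π₀ : integralClosure ℤ_[2] F}
    (hπ₀ : IsLocalRing.maximalIdeal (integralClosure ℤ_[2] F) = Ideal.span {π₀}) :
    ¬ IsUnit π₀ := (mem_m_iff hπ₀).mpr ⟨1, (mul_one π₀).symm⟩

lemma two_ne_zeroO : (2 : integralClosure ℤ_[2] F) ≠ 0 := by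
  haveI := charZeroF (F := F)
  intro h
  have h2 : ((2 : integralClosure ℤ_[2] F) : F) = 0 := by rw [h]; rfl
  rw [show ((2 : integralClosure ℤ_[2] F) : F) = 2 from rfl] at h2
  norm_num at h2

lemma pi_ne_zero {π₀ : integralClosure ℤ_[2] F}
    (hπ₀ : IsLocalRing.maximalIdeal (integralClosure ℤ_[2] F) = Ideal.span {π₀}) :
    π₀ ≠ 0 := by
  rintro rfl
  obtain ⟨s, hs⟩ := two_eq_pi_mul hπ₀
  rw [zero_mul] at hs
  exact two_ne_zeroO hs

lemma piF_ne_zero {π₀ : integralClosure ℤ_[2] F}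
    (hπ₀ : IsLocalRing.maximalIdeal (integralClosure ℤ_[2] F) = Ideal.span {π₀}) :
    ((π₀ : F)) ≠ 0 := fun h => pi_ne_zero hπ₀ (Subtype.coe_injective h)

variable {π₀ : integralClosure ℤ_[2] F} {ϖ : E}

lemma vpi_sq (hϖ : ϖ ^ 2 + algebraMap F E (π₀ : F) = 0) :
    ϖ * ϖ = - algebraMap F E (π₀ : F) := by linear_combination hϖ

lemma vpi_ne_zero (hπ₀ : IsLocalRing.maximalIdeal (integralClosure ℤ_[2] F) = Ideal.span {π₀})
    (hϖ : ϖ ^ 2 + algebraMap F E (π₀ : F) = 0) : ϖ ≠ 0 := by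
  rintro rfl
  have := vpi_sq hϖ
  rw [mul_zero] at this
  have h0 : algebraMap F E (π₀ : F) = 0 := by linear_combination this
  exact piF_ne_zero hπ₀ ((map_eq_zero _).mp h0)

lemma rep_exists (hϖ : ϖ ^ 2 + algebraMap F E (π₀ : F) = 0)
    (hgen : Algebra.adjoin F {ϖ} = ⊤) (e : E) :
    ∃ c d : F, e = algebraMap F E c + algebraMap F E d * ϖ := by
  let S : Subalgebra F E :=
    { carrier := {e | ∃ c d : F, e = algebraMap F E c + algebraMap F E d * ϖ}
      add_mem' := by
        rintro a b ⟨c1, d1, rfl⟩ ⟨c2, d2, rfl⟩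
        exact ⟨c1 + c2, d1 + d2, by push_cast [map_add]; ring⟩
      mul_mem' := by
        rintro a b ⟨c1, d1, rfl⟩ ⟨c2, d2, rfl⟩
        refine ⟨c1 * c2 - d1 * d2 * (π₀ : F), c1 * d2 + d1 * c2, ?_⟩
        simp only [map_sub, map_add, map_mul]
        linear_combination (algebraMap F E d1 * algebraMap F E d2) * hϖ
      algebraMap_mem' := fun c => ⟨c, 0, by simp⟩ }
  have hS : ϖ ∈ S := ⟨0, 1, by simp⟩
  have : (⊤ : Subalgebra F E) ≤ S := by
    rw [← hgen]
    exact Algebra.adjoin_le (by simpa using hS)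
  exact this (by trivial)

variable {σ : E ≃ₐ[F] E}

lemma rep_zero (hπ₀ : IsLocalRing.maximalIdeal (integralClosure ℤ_[2] F) = Ideal.span {π₀})
    (hϖ : ϖ ^ 2 + algebraMap F E (π₀ : F) = 0) (hσ : σ ϖ = -ϖ) {c d : F}
    (h0 : algebraMap F E c + algebraMap F E d * ϖ = 0) : c = 0 ∧ d = 0 := by
  haveI := charZeroE (F := F) (E := E)
  have hd : d = 0 := by
    by_contra hd
    have hϖF : ϖ = algebraMap F E (-c / d) := by
      have hdE : algebraMap F E d ≠ 0 := fun h => hd ((map_eq_zero _).mp h)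
      rw [map_div₀, map_neg, eq_div_iff hdE]
      linear_combination h0
    have : σ ϖ = ϖ := by rw [hϖF]; exact σ.commutes _
    rw [hσ] at this
    have hzero : ϖ = 0 := by
      have h2 : (2 : E) * ϖ = 0 := by linear_combination -this
      rcases mul_eq_zero.mp h2 with h | h
      · exact absurd h two_ne_zero
      · exact h
    exact vpi_ne_zero hπ₀ hϖ hzero
  refine ⟨?_, hd⟩
  rw [hd, map_zero, zero_mul, add_zero] at h0
  exact (map_eq_zero _).mp h0

end RPaux2

namespace RPaux3
open RPaux RPaux2
variable {F : Type*} [Field F] [Algebra ℚ_[2] F]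
  [Algebra ℤ_[2] F] [IsScalarTower ℤ_[2] ℚ_[2] F]
  [IsLocalRing (integralClosure ℤ_[2] F)]
variable {E : Type*} [Field E] [Algebra F E]
variable {π₀ : integralClosure ℤ_[2] F} {ϖ : E} {σ : E ≃ₐ[F] E} {OE : Subring E}

section B
variable (hπ₀ : IsLocalRing.maximalIdeal (integralClosure ℤ_[2] F) = Ideal.span {π₀})
  (hϖ : ϖ ^ 2 + algebraMap F E (π₀ : F) = 0) (hσ : σ ϖ = -ϖ)
  (hOE : ∀ x : E, x ∈ OE ↔ ∃ a b : integralClosure ℤ_[2] F,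
      x = algebraMap F E (a : F) + algebraMap F E (b : F) * ϖ)
include hπ₀ hϖ hσ hOE

lemma rep_eq {c d c' d' : F}
    (hcd : algebraMap F E c + algebraMap F E d * ϖ = algebraMap F E c' + algebraMap F E d' * ϖ) :
    c = c' ∧ d = d' := by
  have h0 : algebraMap F E (c - c') + algebraMap F E (d - d') * ϖ = 0 := by
    rw [map_sub, map_sub]; linear_combination hcd
  obtain ⟨h1, h2⟩ := rep_zero hπ₀ hϖ hσ h0
  exact ⟨sub_eq_zero.mp h1, sub_eq_zero.mp h2⟩

lemma algO_mem (a : integralClosure ℤ_[2] F) : algebraMap F E (a : F) ∈ OE := by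
  rw [hOE]; exact ⟨a, 0, by simp⟩

lemma vpi_mem : ϖ ∈ OE := by
  rw [hOE]; exact ⟨0, 1, by simp⟩

lemma sigma_rep (c d : F) :
    σ (algebraMap F E c + algebraMap F E d * ϖ) = algebraMap F E c - algebraMap F E d * ϖ := by
  rw [map_add, map_mul, σ.commutes, σ.commutes, hσ]; ring

lemma sigma_mem {x : E} (hx : x ∈ OE) : σ x ∈ OE := by
  rw [hOE] at hx ⊢
  obtain ⟨a, b, rfl⟩ := hx
  exact ⟨a, -b, by rw [sigma_rep hπ₀ hϖ hσ hOE]; push_cast; ring⟩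

lemma unit_crit {a b : integralClosure ℤ_[2] F} (ha : IsUnit a) :
    ∃ y ∈ OE, (algebraMap F E (a : F) + algebraMap F E (b : F) * ϖ) * y = 1 := by
  set N : integralClosure ℤ_[2] F := a^2 + b^2*π₀ with hN
  have hNu : IsUnit N := by
    by_contra hnu
    obtain ⟨s, hs⟩ := (mem_m_iff hπ₀).mp hnu
    have ha2 : a^2 = π₀ * (s - b^2) := by rw [mul_sub, ← hs, hN]; ring
    have hmem : a^2 ∈ Ideal.span {π₀} := Ideal.mem_span_singleton.mpr ⟨s - b^2, ha2⟩
    rw [← hπ₀] at hmem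
    have hprime : (IsLocalRing.maximalIdeal (integralClosure ℤ_[2] F)).IsPrime :=
      (IsLocalRing.maximalIdeal.isMaximal _).isPrime
    have hamem : a ∈ IsLocalRing.maximalIdeal (integralClosure ℤ_[2] F) := by
      rcases (hprime.mem_or_mem (by rwa [sq] at hmem)) with h | h <;> exact h
    exact hamem ha
  obtain ⟨Ninv, hNinv⟩ := isUnit_iff_exists_inv.mp hNu
  refine ⟨(algebraMap F E (a : F) - algebraMap F E (b : F) * ϖ) * algebraMap F E ((Ninv : F)), ?_, ?_⟩
  · rw [hOE]
    refine ⟨a * Ninv, -(b * Ninv), ?_⟩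
    have e1 : ((a * Ninv : integralClosure ℤ_[2] F) : F) = (a : F) * (Ninv : F) := rfl
    have e2 : ((-(b * Ninv) : integralClosure ℤ_[2] F) : F) = -((b : F) * (Ninv : F)) := rfl
    rw [e1, e2]
    simp only [map_mul, map_neg]
    ring
  · have hNF : ((N : F)) * ((Ninv : F)) = 1 := by exact_mod_cast congrArg Subtype.val hNinv
    have hNE : algebraMap F E (N : F) * algebraMap F E (Ninv : F) = 1 := by
      rw [← map_mul, hNF, map_one]
    have hNF2 : ((N : F)) = (a : F)^2 + (b : F)^2 * ((π₀ : F)) := by rw [hN]; push_cast; ring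
    have hexp : algebraMap F E (N : F) =
        algebraMap F E (a : F)^2 + algebraMap F E (b : F)^2 * algebraMap F E (π₀ : F) := by
      rw [hNF2, map_add, map_mul, map_pow, map_pow]
    linear_combination hNE - (algebraMap F E (Ninv : F)) * hexp -
      (algebraMap F E (Ninv : F)) * (algebraMap F E (b : F))^2 * hϖ

lemma vpi_mul_rep (c d : F) :
    ϖ * (algebraMap F E c + algebraMap F E d * ϖ) =
      algebraMap F E (-(d * (π₀ : F))) + algebraMap F E c * ϖ := by
  rw [map_neg, map_mul]
  linear_combination algebraMap F E d * hϖ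

lemma unit_or_vpi {a b : integralClosure ℤ_[2] F} (hnu : ¬ IsUnit a) :
    ∃ y ∈ OE, algebraMap F E (a : F) + algebraMap F E (b : F) * ϖ = ϖ * y := by
  obtain ⟨a', ha'⟩ := (mem_m_iff hπ₀).mp hnu
  refine ⟨algebraMap F E ((-a' : integralClosure ℤ_[2] F) : F) * ϖ + algebraMap F E (b : F), (hOE _).mpr ⟨b, -a', by ring⟩, ?_⟩
  have hc : (-((((-a' : integralClosure ℤ_[2] F) : F)) * ((π₀ : F)))) = (a : F) := by
    rw [ha']; push_cast; ring
  have := vpi_mul_rep hπ₀ hϖ hσ hOE (b : F) ((-a' : integralClosure ℤ_[2] F) : F)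
  rw [hc] at this
  rw [show ϖ * (algebraMap F E ((-a' : integralClosure ℤ_[2] F) : F) * ϖ + algebraMap F E (b : F)) = ϖ * (algebraMap F E (b : F) + algebraMap F E ((-a' : integralClosure ℤ_[2] F) : F) * ϖ) from by ring, this]

lemma one_not_vpi : ¬ ∃ y ∈ OE, (1 : E) = ϖ * y := by
  rintro ⟨y, hy, h1⟩
  rw [hOE] at hy
  obtain ⟨c, d, rfl⟩ := hy
  rw [vpi_mul_rep hπ₀ hϖ hσ hOE] at h1
  have h1' : algebraMap F E (1:F) + algebraMap F E (0:F) * ϖ =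
      algebraMap F E (-((d:F) * (π₀ : F))) + algebraMap F E (c:F) * ϖ := by
    simpa using h1
  obtain ⟨he, -⟩ := rep_eq hπ₀ hϖ hσ hOE h1'
  have : (1 : integralClosure ℤ_[2] F) = -(d * π₀) := by
    apply Subtype.coe_injective; push_cast; exact he
  exact pi_not_unit hπ₀ (IsUnit.of_mul_eq_one (a := π₀) (-d) (by linear_combination -this))

lemma unit_of_not_vpi {x : E} (hx : x ∈ OE) (hnv : ¬ ∃ y ∈ OE, x = ϖ * y) :
    ∃ y ∈ OE, x * y = 1 := by
  obtain ⟨a, b, rfl⟩ := (hOE x).mp hx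
  by_cases ha : IsUnit a
  · exact unit_crit hπ₀ hϖ hσ hOE ha
  · exact absurd (unit_or_vpi hπ₀ hϖ hσ hOE ha) hnv

lemma vpi_not_unit_OE {x y z : E} (hy : y ∈ OE) (hz : z ∈ OE) (hxy : x = ϖ * y)
    (hxz : x * z = 1) : False := by
  apply one_not_vpi hπ₀ hϖ hσ hOE
  exact ⟨y * z, OE.mul_mem hy hz, by rw [← hxz, hxy]; ring⟩

lemma trace_rep {t : E} (htv : ϖ * t ∈ OE) :
    ∃ c : integralClosure ℤ_[2] F, t + σ t = algebraMap F E (2 * (c : F)) := by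
  obtain ⟨a, b, hab⟩ := (hOE _).mp htv
  refine ⟨b, ?_⟩
  have hvne : ϖ ≠ 0 := vpi_ne_zero hπ₀ hϖ
  have hσt : σ (ϖ * t) = -ϖ * σ t := by rw [map_mul, hσ]
  have h2 : ϖ * (t + σ t) = ϖ * algebraMap F E (2 * (b : F)) := by
    have := sigma_rep hπ₀ hϖ hσ hOE ((a : F)) ((b : F))
    rw [← hab] at this
    rw [hσt] at this
    rw [map_mul, map_ofNat]
    linear_combination hab - this
  exact mul_left_cancel₀ hvne h2

end B
end RPaux3

namespace RPaux4
open RPaux RPaux2 RPaux3 Polynomial Finset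

lemma zmod2 (y : ℤ_[2]) : (∃ b, y = 2 * b) ∨ (∃ b, y = 1 + 2 * b) := by
  have hspan : ∀ z : ℤ_[2], PadicInt.toZMod z = 0 → ∃ b, z = 2 * b := by
    intro z hz
    have : z ∈ RingHom.ker (PadicInt.toZMod (p := 2)) := hz
    rw [PadicInt.ker_toZMod, PadicInt.maximalIdeal_eq_span_p] at this
    rw [Ideal.mem_span_singleton] at this
    obtain ⟨b, hb⟩ := this
    exact ⟨b, by rw [hb]; norm_num⟩
  have hcase : ∀ z : ZMod 2, z = 0 ∨ z = 1 := by decide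
  rcases hcase (PadicInt.toZMod y) with h | h
  · exact Or.inl (hspan y h)
  · right
    have : PadicInt.toZMod (y - 1) = 0 := by rw [map_sub, h, map_one, sub_self]
    obtain ⟨b, hb⟩ := hspan _ this
    exact ⟨b, by linear_combination hb⟩

lemma two_not_unit_Z2 : ¬ IsUnit (2 : ℤ_[2]) := by
  rw [PadicInt.isUnit_iff]
  have : ‖(2:ℤ_[2])‖ = 2⁻¹ := by
    simpa using PadicInt.norm_p (p := 2)
  rw [this]; norm_num

variable {F : Type*} [Field F] [Algebra ℚ_[2] F]
  [Algebra ℤ_[2] F] [IsScalarTower ℤ_[2] ℚ_[2] F]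
  [IsLocalRing (integralClosure ℤ_[2] F)]

lemma pi_pow_two {π₀ : integralClosure ℤ_[2] F}
    (hπ₀ : IsLocalRing.maximalIdeal (integralClosure ℤ_[2] F) = Ideal.span {π₀}) :
    ∃ (m : ℕ) (s : integralClosure ℤ_[2] F), π₀ ^ m = 2 * s := by
  classical
  obtain ⟨p, pmon, peval⟩ := π₀.2
  set n := p.natDegree with hn
  set φ := algebraMap ℤ_[2] (integralClosure ℤ_[2] F) with hφ
  have hA : ∑ i ∈ range (n + 1), φ (p.coeff i) * π₀ ^ i = 0 := by
    apply Subtype.coe_injective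
    have hco : ((∑ i ∈ range (n + 1), φ (p.coeff i) * π₀ ^ i : integralClosure ℤ_[2] F) : F)
        = ∑ i ∈ range (n + 1), algebraMap ℤ_[2] F (p.coeff i) * ((π₀ : F)) ^ i := by
      push_cast
      rfl
    show ((∑ i ∈ range (n + 1), φ (p.coeff i) * π₀ ^ i : integralClosure ℤ_[2] F) : F)
        = ((0 : integralClosure ℤ_[2] F) : F)
    rw [hco, show ((0 : integralClosure ℤ_[2] F) : F) = 0 from rfl]
    rw [Polynomial.eval₂_eq_sum_range] at peval
    exact peval
  have hdec : ∀ i, ∃ (e b : ℤ_[2]), (e = 0 ∨ e = 1) ∧ p.coeff i = e + 2 * b := by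
    intro i
    rcases zmod2 (p.coeff i) with ⟨b, hb⟩ | ⟨b, hb⟩
    · exact ⟨0, b, Or.inl rfl, by linear_combination hb⟩
    · exact ⟨1, b, Or.inr rfl, by linear_combination hb⟩
  choose e b he hb using hdec
  have hen : e n = 1 := by
    rcases he n with h0 | h1
    · exfalso
      have hcn : p.coeff n = 1 := pmon.coeff_natDegree
      have h2 : (1 : ℤ_[2]) = 2 * b n := by
        have := hb n
        rw [hcn, h0, zero_add] at this
        exact this
      exact two_not_unit_Z2 (IsUnit.of_mul_eq_one (b n) h2.symm)
    · exact h1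
  have hex : ∃ i, i ≤ n ∧ e i = 1 := ⟨n, le_refl n, hen⟩
  set j := Nat.find hex with hj
  obtain ⟨hjn, hej⟩ := Nat.find_spec hex
  rw [← hj] at hjn hej
  have hlt : ∀ i, i < j → e i = 0 := by
    intro i hi
    have hi' : i < Nat.find hex := by rw [← hj]; exact hi
    have hm := Nat.find_min hex hi'
    rcases he i with h0 | h1
    · exact h0
    · exact absurd ⟨le_trans (le_of_lt hi) hjn, h1⟩ hm
  set s₀ : integralClosure ℤ_[2] F := -∑ i ∈ range (n + 1), φ (b i) * π₀ ^ i with hs₀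
  have hsum1 : ∑ i ∈ range (n + 1), φ (e i) * π₀ ^ i = 2 * s₀ := by
    have hsp : ∑ i ∈ range (n + 1), φ (e i) * π₀ ^ i
        = ∑ i ∈ range (n + 1), (φ (p.coeff i) * π₀ ^ i - 2 * (φ (b i) * π₀ ^ i)) := by
      apply Finset.sum_congr rfl
      intro i _
      rw [hb i, map_add, map_mul, map_ofNat]
      ring
    rw [hsp, Finset.sum_sub_distrib, hA, ← Finset.mul_sum, hs₀]
    ring
  have hzero : ∀ i ∈ range (n + 1), i ∉ Ico j (n + 1) → φ (e i) * π₀ ^ i = 0 := by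
    intro i hi hni
    rw [Finset.mem_range] at hi
    rw [Finset.mem_Ico] at hni
    have : i < j := by omega
    rw [hlt i this, map_zero, zero_mul]
  have hIco : ∑ i ∈ Ico j (n + 1), φ (e i) * π₀ ^ i
      = ∑ i ∈ range (n + 1), φ (e i) * π₀ ^ i := by
    apply Finset.sum_subset
    · intro i hi
      rw [Finset.mem_Ico] at hi
      rw [Finset.mem_range]
      omega
    · exact hzero
  have hIR : ∑ i ∈ Ico j (n + 1), φ (e i) * π₀ ^ i
      = ∑ i ∈ range (n + 1 - j), φ (e (j + i)) * π₀ ^ (j + i) :=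
    Finset.sum_Ico_eq_sum_range _ _ _
  have hnj : n + 1 - j = (n - j) + 1 := by omega
  rw [hnj, Finset.sum_range_succ'] at hIR
  set r : integralClosure ℤ_[2] F := ∑ i ∈ range (n - j), φ (e (j + (i + 1))) * π₀ ^ i with hr
  have hfac : ∑ i ∈ range (n - j), φ (e (j + (i + 1))) * π₀ ^ (j + (i + 1))
      = π₀ ^ (j + 1) * r := by
    rw [hr, Finset.mul_sum]
    apply Finset.sum_congr rfl
    intro i _
    rw [show j + (i + 1) = (j + 1) + i by omega, pow_add]
    ring
  have key : π₀ ^ j * (1 + π₀ * r) = 2 * s₀ := by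
    have hj0 : φ (e (j + 0)) * π₀ ^ (j + 0) = π₀ ^ j := by
      rw [Nat.add_zero, hej, map_one, one_mul]
    rw [← hsum1, ← hIco, hIR, hfac, hj0]
    ring
  have hunit : IsUnit (1 + π₀ * r) := by
    by_contra hnu
    obtain ⟨t, ht⟩ := (mem_m_iff hπ₀).mp hnu
    have h1 : π₀ * (t - r) = 1 := by linear_combination -ht
    exact pi_not_unit hπ₀ (IsUnit.of_mul_eq_one _ h1)
  obtain ⟨u, hu⟩ := isUnit_iff_exists_inv.mp hunit
  refine ⟨j, s₀ * u, ?_⟩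
  calc π₀ ^ j = π₀ ^ j * ((1 + π₀ * r) * u) := by rw [hu, mul_one]
    _ = (π₀ ^ j * (1 + π₀ * r)) * u := by ring
    _ = 2 * (s₀ * u) := by rw [key]; ring

end RPaux4

namespace RPaux5
open RPaux RPaux2 RPaux3 RPaux4
variable {F : Type*} [Field F] [Algebra ℚ_[2] F] [FiniteDimensional ℚ_[2] F]
  [Algebra ℤ_[2] F] [IsScalarTower ℤ_[2] ℚ_[2] F]
  [IsLocalRing (integralClosure ℤ_[2] F)]

lemma denom_F (c : F) :
    ∃ (k : ℕ) (a : integralClosure ℤ_[2] F), (2 : F) ^ k * c = (a : F) := by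
  have halg : IsAlgebraic ℤ_[2] c := by
    rw [IsFractionRing.isAlgebraic_iff ℤ_[2] ℚ_[2] F]
    exact Algebra.IsAlgebraic.isAlgebraic c
  obtain ⟨x, y, hy, hxy⟩ : ∃ (x : integralClosure ℤ_[2] F) (y : ℤ_[2]), y ≠ 0 ∧
      c * algebraMap ℤ_[2] F y = (x : F) := by
    obtain ⟨y, hy, hint⟩ := halg.exists_integral_multiple
    exact ⟨⟨y • c, (mem_integralClosure_iff _ _).mpr hint⟩, y, hy, by
      show c * algebraMap ℤ_[2] F y = y • c
      rw [Algebra.smul_def, mul_comm]⟩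
  set v := y.valuation with hv
  have hyspec : y = (PadicInt.unitCoeff hy : ℤ_[2]) * (2 : ℤ_[2]) ^ v := by
    have := PadicInt.unitCoeff_spec hy
    exact_mod_cast this
  refine ⟨v, algebraMap ℤ_[2] (integralClosure ℤ_[2] F) (((PadicInt.unitCoeff hy)⁻¹ : ℤ_[2]ˣ) : ℤ_[2]) * x, ?_⟩
  have hcoe : ((algebraMap ℤ_[2] (integralClosure ℤ_[2] F) (((PadicInt.unitCoeff hy)⁻¹ : ℤ_[2]ˣ) : ℤ_[2]) * x : integralClosure ℤ_[2] F) : F)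
      = algebraMap ℤ_[2] F (((PadicInt.unitCoeff hy)⁻¹ : ℤ_[2]ˣ) : ℤ_[2]) * (x : F) := rfl
  rw [hcoe, ← hxy]
  have h5 := congrArg (algebraMap ℤ_[2] F) hyspec
  rw [map_mul, map_pow, map_ofNat] at h5
  rw [h5]
  have huu : algebraMap ℤ_[2] F (((PadicInt.unitCoeff hy)⁻¹ : ℤ_[2]ˣ) : ℤ_[2])
      * algebraMap ℤ_[2] F ((PadicInt.unitCoeff hy : ℤ_[2]ˣ) : ℤ_[2]) = 1 := by
    rw [← map_mul]
    have : (((PadicInt.unitCoeff hy)⁻¹ : ℤ_[2]ˣ) : ℤ_[2]) * ((PadicInt.unitCoeff hy : ℤ_[2]ˣ) : ℤ_[2]) = 1 := by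
      exact_mod_cast (PadicInt.unitCoeff hy).inv_mul
    rw [this, map_one]
  linear_combination (-((2:F)^v * c)) * huu

lemma denom_pi {π₀ : integralClosure ℤ_[2] F}
    (hπ₀ : IsLocalRing.maximalIdeal (integralClosure ℤ_[2] F) = Ideal.span {π₀}) (c : F) :
    ∃ (t : ℕ) (a : integralClosure ℤ_[2] F), ((π₀ : F)) ^ t * c = (a : F) := by
  obtain ⟨k, a, hka⟩ := denom_F (F := F) c
  obtain ⟨m, s, hms⟩ := pi_pow_two hπ₀
  refine ⟨m * k, s ^ k * a, ?_⟩
  have h1 : ((π₀ : F)) ^ (m * k) = (2:F) ^ k * ((s : F)) ^ k := by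
    have := congrArg (fun z : integralClosure ℤ_[2] F => (z : F)) hms
    push_cast at this
    rw [show ((2 : integralClosure ℤ_[2] F) : F) = (2:F) from rfl] at this
    rw [pow_mul, this]
    ring
  have hcoe : ((s ^ k * a : integralClosure ℤ_[2] F) : F) = ((s:F))^k * (a : F) := by push_cast; ring
  rw [h1, hcoe, ← hka]
  ring

lemma pad_pi {π₀ : integralClosure ℤ_[2] F}
    {c : F} {t k : ℕ} (hk : t ≤ k) {a : integralClosure ℤ_[2] F}
    (h : ((π₀ : F)) ^ t * c = (a : F)) :
    ∃ b : integralClosure ℤ_[2] F, ((π₀ : F)) ^ k * c = (b : F) := by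
  refine ⟨π₀ ^ (k - t) * a, ?_⟩
  have hcoe : ((π₀ ^ (k - t) * a : integralClosure ℤ_[2] F) : F) = ((π₀:F))^(k-t) * (a : F) := by
    push_cast; ring
  have hkt : k - t + t = k := by omega
  rw [hcoe, ← h, ← mul_assoc, ← pow_add, hkt]

lemma no_inf_div {π₀ : integralClosure ℤ_[2] F}
    (hπ₀ : IsLocalRing.maximalIdeal (integralClosure ℤ_[2] F) = Ideal.span {π₀})
    {c : F} (hc : c ≠ 0)
    (hall : ∀ t : ℕ, ∃ a : integralClosure ℤ_[2] F, c = ((π₀ : F)) ^ t * (a : F)) : False := by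
  obtain ⟨t, e, hte⟩ := denom_pi hπ₀ c⁻¹
  obtain ⟨d, hd⟩ := hall (t + 1)
  have hπF : ((π₀ : F)) ≠ 0 := piF_ne_zero hπ₀
  have h1 : (1 : F) = ((π₀ : F)) * ((e : F) * (d : F)) := by
    have h2 : ((π₀ : F)) ^ t = (e : F) * c := by
      rw [← hte]; field_simp
    have h3 : ((π₀ : F)) ^ t * 1 = ((π₀ : F)) ^ t * (((π₀ : F)) * ((e : F) * (d : F))) := by
      rw [mul_one]
      calc ((π₀ : F)) ^ t = (e : F) * c := h2
        _ = (e : F) * (((π₀ : F)) ^ (t+1) * (d : F)) := by rw [← hd]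
        _ = ((π₀ : F)) ^ t * (((π₀ : F)) * ((e : F) * (d : F))) := by ring
    exact mul_left_cancel₀ (pow_ne_zero t hπF) h3
  have h4 : π₀ * (e * d) = 1 := by
    apply Subtype.coe_injective
    push_cast
    exact h1.symm
  exact pi_not_unit hπ₀ (IsUnit.of_mul_eq_one _ h4)

variable {E : Type*} [Field E] [Algebra F E]
variable {π₀ : integralClosure ℤ_[2] F} {ϖ : E} {σ : E ≃ₐ[F] E} {OE : Subring E}

section C
variable (hπ₀ : IsLocalRing.maximalIdeal (integralClosure ℤ_[2] F) = Ideal.span {π₀})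
  (hϖ : ϖ ^ 2 + algebraMap F E (π₀ : F) = 0) (hσ : σ ϖ = -ϖ)
  (hgen : Algebra.adjoin F {ϖ} = ⊤)
  (hOE : ∀ x : E, x ∈ OE ↔ ∃ a b : integralClosure ℤ_[2] F,
      x = algebraMap F E (a : F) + algebraMap F E (b : F) * ϖ)
include hπ₀ hϖ hσ hgen hOE

lemma vpi_even_pow (t : ℕ) :
    ϖ ^ (2 * t) = algebraMap F E ((((-1 : integralClosure ℤ_[2] F)) ^ t * π₀ ^ t : integralClosure ℤ_[2] F) : F) := by
  have h1 : ϖ ^ (2 * t) = (ϖ ^ 2) ^ t := by rw [← pow_mul]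
  have h2 : ϖ ^ 2 = - algebraMap F E ((π₀ : F)) := by linear_combination hϖ
  rw [h1, h2]
  have hcoe : ((((-1 : integralClosure ℤ_[2] F)) ^ t * π₀ ^ t : integralClosure ℤ_[2] F) : F)
      = (-1 : F) ^ t * ((π₀ : F)) ^ t := by push_cast; ring
  rw [hcoe, map_mul, map_pow, map_pow, map_neg, map_one]
  ring

lemma denom_E (x : E) : ∃ k : ℕ, ϖ ^ (2 * k) * x ∈ OE := by
  obtain ⟨c, d, rfl⟩ := rep_exists hϖ hgen x
  obtain ⟨t1, a1, h1⟩ := denom_pi hπ₀ c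
  obtain ⟨t2, a2, h2⟩ := denom_pi hπ₀ d
  obtain ⟨b1, hb1⟩ := pad_pi (le_max_left t1 t2) h1
  obtain ⟨b2, hb2⟩ := pad_pi (le_max_right t1 t2) h2
  set k := max t1 t2
  refine ⟨k, ?_⟩
  rw [vpi_even_pow hπ₀ hϖ hσ hgen hOE]
  rw [hOE]
  refine ⟨(-1)^k * b1, (-1)^k * b2, ?_⟩
  have c1 : ((((-1 : integralClosure ℤ_[2] F))^k * π₀^k : integralClosure ℤ_[2] F) : F) = (-1:F)^k * ((π₀:F))^k := by push_cast; ring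
  have c2 : ((((-1 : integralClosure ℤ_[2] F))^k * b1 : integralClosure ℤ_[2] F) : F) = (-1:F)^k * ((b1:F)) := by push_cast; ring
  have c3 : ((((-1 : integralClosure ℤ_[2] F))^k * b2 : integralClosure ℤ_[2] F) : F) = (-1:F)^k * ((b2:F)) := by push_cast; ring
  rw [c1, c2, c3, ← hb1, ← hb2]
  simp only [map_mul, map_pow, map_neg, map_one]
  ring

lemma not_all_div {x : E} (hx : x ≠ 0) : ¬ ∀ t : ℕ, ∃ y ∈ OE, x = ϖ ^ t * y := by
  intro hall
  obtain ⟨c, d, rfl⟩ := rep_exists hϖ hgen x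
  have hkey : ∀ s : F, (∀ t : ℕ, ∃ a : integralClosure ℤ_[2] F, s = ((π₀ : F)) ^ t * (a : F)) → s = 0 := by
    intro s hs
    by_contra hsne
    exact no_inf_div hπ₀ hsne hs
  have hcomp : ∀ t : ℕ, (∃ a : integralClosure ℤ_[2] F, c = ((π₀ : F)) ^ t * (a : F))
      ∧ (∃ a : integralClosure ℤ_[2] F, d = ((π₀ : F)) ^ t * (a : F)) := by
    intro t
    obtain ⟨y, hy, hxy⟩ := hall (2 * t)
    obtain ⟨ya, yb, rfl⟩ := (hOE y).mp hy
    rw [vpi_even_pow hπ₀ hϖ hσ hgen hOE] at hxy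
    set ε : integralClosure ℤ_[2] F := ((-1 : integralClosure ℤ_[2] F)) ^ t * π₀ ^ t with hε
    have hxy2 : algebraMap F E c + algebraMap F E d * ϖ
        = algebraMap F E (((ε * ya : integralClosure ℤ_[2] F)) : F)
          + algebraMap F E (((ε * yb : integralClosure ℤ_[2] F)) : F) * ϖ := by
      have c4 : (((ε * ya : integralClosure ℤ_[2] F)) : F) = ((ε : F)) * ((ya : F)) := rfl
      have c5 : (((ε * yb : integralClosure ℤ_[2] F)) : F) = ((ε : F)) * ((yb : F)) := rfl
      rw [hxy, c4, c5]
      simp only [map_mul]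
      ring
    obtain ⟨hc, hd⟩ := rep_eq hπ₀ hϖ hσ hOE hxy2
    constructor
    · refine ⟨(-1)^t * ya, ?_⟩
      rw [hc, hε]; push_cast; ring
    · refine ⟨(-1)^t * yb, ?_⟩
      rw [hd, hε]; push_cast; ring
  by_cases hc : c = 0
  · have hd : d = 0 := hkey d (fun t => (hcomp t).2)
    rw [hc, hd] at hx
    simp at hx
  · exact hc (hkey c (fun t => (hcomp t).1))

end C
end RPaux5



namespace RPaux6
open RPaux RPaux2 RPaux3 RPaux4 RPaux5
variable {F : Type*} [Field F] [Algebra ℚ_[2] F] [FiniteDimensional ℚ_[2] F]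
  [Algebra ℤ_[2] F] [IsScalarTower ℤ_[2] ℚ_[2] F]
  [IsLocalRing (integralClosure ℤ_[2] F)]
variable {E : Type*} [Field E] [Algebra F E]
variable {C : Type*} [AddCommGroup C] [Module E C]
variable {π₀ : integralClosure ℤ_[2] F} {ϖ : E} {σ : E ≃ₐ[F] E} {OE : Subring E}

section D
variable (hπ₀ : IsLocalRing.maximalIdeal (integralClosure ℤ_[2] F) = Ideal.span {π₀})
  (hϖ : ϖ ^ 2 + algebraMap F E (π₀ : F) = 0) (hσ : σ ϖ = -ϖ)
  (hgen : Algebra.adjoin F {ϖ} = ⊤)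
  (hOE : ∀ x : E, x ∈ OE ↔ ∃ a b : integralClosure ℤ_[2] F,
      x = algebraMap F E (a : F) + algebraMap F E (b : F) * ϖ)
include hπ₀ hϖ hσ hgen hOE

lemma sigma_invol (e : E) : σ (σ e) = e := by
  obtain ⟨c, d, rfl⟩ := rep_exists hϖ hgen e
  rw [sigma_rep hπ₀ hϖ hσ hOE]
  have : algebraMap F E c - algebraMap F E d * ϖ
      = algebraMap F E c + algebraMap F E (-d) * ϖ := by rw [map_neg]; ring
  rw [this, sigma_rep hπ₀ hϖ hσ hOE, map_neg]
  ring

lemma fixed_rep {e : E} (hf : σ e = e) : ∃ c : F, e = algebraMap F E c := by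
  haveI := charZeroF (F := F)
  obtain ⟨c, d, rfl⟩ := rep_exists hϖ hgen e
  rw [sigma_rep hπ₀ hϖ hσ hOE] at hf
  have hf' : algebraMap F E c + algebraMap F E (-d) * ϖ
      = algebraMap F E c + algebraMap F E d * ϖ := by rw [map_neg]; linear_combination hf
  obtain ⟨-, hd⟩ := rep_eq hπ₀ hϖ hσ hOE hf'
  have h2d : (2:F) * d = 0 := by linear_combination -hd
  have hd0 : d = 0 := by
    rcases mul_eq_zero.mp h2d with h | h
    · exact absurd h two_ne_zero
    · exact h
  refine ⟨c, by rw [hd0, map_zero, zero_mul, add_zero]⟩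

lemma trace_rep' {t : E} {a b : integralClosure ℤ_[2] F}
    (hab : ϖ * t = algebraMap F E (a : F) + algebraMap F E (b : F) * ϖ) :
    t + σ t = algebraMap F E (2 * (b : F)) := by
  have hvne : ϖ ≠ 0 := vpi_ne_zero hπ₀ hϖ
  have hσt : σ (ϖ * t) = -ϖ * σ t := by rw [map_mul, hσ]
  have h2 : ϖ * (t + σ t) = ϖ * algebraMap F E (2 * (b : F)) := by
    have hs := sigma_rep hπ₀ hϖ hσ hOE ((a : F)) ((b : F))
    rw [← hab, hσt] at hs
    rw [map_mul, map_ofNat]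
    linear_combination hab - hs
  exact mul_left_cancel₀ hvne h2

lemma lat_nakayama {Λ : Submodule OE C} (hFG : Λ.FG)
    (hspan : Submodule.span E (Λ : Set C) = ⊤) (hC : Nontrivial C)
    (hsub : ∀ x ∈ Λ, ∃ y ∈ Λ, x = ϖ • y) : False := by
  set ϖ' : OE := ⟨ϖ, vpi_mem hπ₀ hϖ hσ hOE⟩ with hϖ'
  have hIN : Λ ≤ (Ideal.span {ϖ'}) • Λ := by
    intro x hx
    obtain ⟨y, hy, hxy⟩ := hsub x hx
    have : ϖ' • y ∈ (Ideal.span {ϖ'}) • Λ :=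
      Submodule.smul_mem_smul (Ideal.mem_span_singleton_self ϖ') hy
    rwa [show ϖ' • y = x from hxy.symm] at this
  have hjac : Ideal.span {ϖ'} ≤ (⊥ : Ideal OE).jacobson := by
    rw [Ideal.span_le, Set.singleton_subset_iff]
    rw [SetLike.mem_coe, Ideal.mem_jacobson_bot]
    intro y
    obtain ⟨ya, yb, hyab⟩ := (hOE (y : E)).mp y.2
    have hval : ((ϖ' * y + 1 : OE) : E)
        = algebraMap F E (((1 - yb * π₀ : integralClosure ℤ_[2] F)) : F)
          + algebraMap F E ((ya : F)) * ϖ := by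
      have h1 : ((ϖ' * y + 1 : OE) : E) = ϖ * (y : E) + 1 := rfl
      rw [h1, hyab, vpi_mul_rep hπ₀ hϖ hσ hOE]
      push_cast
      ring
    have hub : IsUnit (1 - yb * π₀) := by
      by_contra hnu
      obtain ⟨s, hs⟩ := (mem_m_iff hπ₀).mp hnu
      have : π₀ * (s + yb) = 1 := by linear_combination -hs
      exact pi_not_unit hπ₀ (IsUnit.of_mul_eq_one _ this)
    obtain ⟨w, hwOE, hw1⟩ := unit_crit hπ₀ hϖ hσ hOE (b := ya) hub
    refine IsUnit.of_mul_eq_one ⟨w, hwOE⟩ ?_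
    apply Subtype.coe_injective
    have : ((ϖ' * y + 1 : OE) : E) * w = 1 := by rw [hval]; exact hw1
    exact this
  have hbot := Submodule.eq_bot_of_le_smul_of_le_jacobson_bot (Ideal.span {ϖ'}) Λ hFG hIN hjac
  rw [hbot] at hspan
  have : ((⊥ : Submodule OE C) : Set C) = {0} := by simp
  rw [this] at hspan
  simp only [Submodule.span_singleton_eq_bot.mpr rfl] at hspan
  exact absurd hspan.symm top_ne_bot

end D
end RPaux6

/-- **Hyperbolic lattices in the (R-P) case.**  A selfdual (resp. `Π⁻¹`-modular) lattice
in the split hermitian plane is hyperbolic iff its norm ideal is `2·O_F`, and this norm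
ideal is minimal: every selfdual or `Π⁻¹`-modular lattice `Λ` satisfies
`2·O_F ⊆ Nm(Λ)`. -/
theorem hyperbolic_iff_norm_two_RP
    (F : Type*) [Field F] [Algebra ℚ_[2] F] [FiniteDimensional ℚ_[2] F]
    [Algebra ℤ_[2] F] [IsScalarTower ℤ_[2] ℚ_[2] F]
    [IsLocalRing (integralClosure ℤ_[2] F)]
    (π₀ : integralClosure ℤ_[2] F)
    (hπ₀ : IsLocalRing.maximalIdeal (integralClosure ℤ_[2] F) = Ideal.span {π₀})
    [Algebra F E] [FiniteDimensional F E] (hdeg : Module.finrank F E = 2)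
    (ϖ : E) (hϖ : ϖ ^ 2 + algebraMap F E (π₀ : F) = 0)
    (hgen : Algebra.adjoin F {ϖ} = ⊤)
    (σ : E ≃ₐ[F] E) (hσ : σ ϖ = -ϖ)
    (OE : Subring E)
    (hOE : ∀ x : E, x ∈ OE ↔ ∃ a b : integralClosure ℤ_[2] F,
        x = algebraMap F E (a : F) + algebraMap F E (b : F) * ϖ)
    (hdimC : Module.finrank E C = 2)
    (h : C → C → E)
    (h_add_left : ∀ x y z, h (x + y) z = h x z + h y z)
    (h_add_right : ∀ x y z, h x (y + z) = h x y + h x z)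
    (h_smul_left : ∀ (α : E) (x y : C), h (α • x) y = α * h x y)
    (h_smul_right : ∀ (α : E) (x y : C), h x (α • y) = σ α * h x y)
    (h_conj : ∀ x y, h y x = σ (h x y))
    (h_nondeg : ∀ x, (∀ y, h x y = 0) → x = 0)
    (h_split : ∃ b : Module.Basis (Fin 2) E C,
        h (b 0) (b 0) = 0 ∧ h (b 1) (b 1) = 0 ∧ h (b 0) (b 1) = 1) :
    (∀ Λ : Submodule OE C, IsLattice OE Λ → IsSelfdual OE h Λ →
      (IsHyperbolic OE h Λ ↔
        normIdeal F h Λ = Submodule.span (integralClosure ℤ_[2] F) {(2 : F)})) ∧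
    (∀ Λ : Submodule OE C, IsLattice OE Λ → IsModular ϖ⁻¹ OE h Λ →
      (IsHyperbolic OE h Λ ↔
        normIdeal F h Λ = Submodule.span (integralClosure ℤ_[2] F) {(2 : F)})) ∧
    (∀ Λ : Submodule OE C, IsLattice OE Λ →
      (IsSelfdual OE h Λ ∨ IsModular ϖ⁻¹ OE h Λ) →
      Submodule.span (integralClosure ℤ_[2] F) {(2 : F)} ≤ normIdeal F h Λ) := by
  classical
  obtain ⟨bE, hbE00, hbE11, hbE01⟩ := h_split
  have hϖmem : ϖ ∈ OE := RPaux3.vpi_mem hπ₀ hϖ hσ hOE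
  have hϖne : ϖ ≠ 0 := RPaux2.vpi_ne_zero hπ₀ hϖ
  haveI hCZF : CharZero F := RPaux.charZeroF
  have hCnt : Nontrivial C := Module.nontrivial_of_finrank_pos (R := E) (by rw [hdimC]; norm_num)
  have halgInj : Function.Injective (algebraMap F E) := (algebraMap F E).injective
  have qF : ∀ x : C, ∃ c : F, algebraMap F E c = h x x := by
    intro x
    obtain ⟨c, hc⟩ := RPaux6.fixed_rep hπ₀ hϖ hσ hgen hOE (h_conj x x).symm
    exact ⟨c, hc.symm⟩
  have h0l : ∀ z : C, h 0 z = 0 := by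
    intro z
    have := h_add_left 0 0 z
    rw [add_zero] at this
    exact (left_eq_add.mp this)
  have h0r : ∀ z : C, h z 0 = 0 := by
    intro z
    have := h_add_right z 0 0
    rw [add_zero] at this
    exact (left_eq_add.mp this)
  have h_sub_left : ∀ x y z : C, h (x - y) z = h x z - h y z := by
    intro x y z
    have := h_add_left (x - y) y z
    rw [sub_add_cancel] at this
    linear_combination -this
  have main : ∀ Λ : Submodule OE C, IsLattice OE Λ →
      (IsSelfdual OE h Λ ∨ IsModular ϖ⁻¹ OE h Λ) →
      (Submodule.span (integralClosure ℤ_[2] F) {(2 : F)} ≤ normIdeal F h Λ) ∧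
      (IsHyperbolic OE h Λ ↔
        normIdeal F h Λ = Submodule.span (integralClosure ℤ_[2] F) {(2 : F)}) := by
    intro Λ hlat hdual
    have hDualEq : ∀ z : C, z ∈ hermDual OE h Λ ↔ (∀ y ∈ Λ, h z y ∈ OE) := fun z => Iff.rfl
    -- interface fact 1 : integrality
    have hInt : ∀ x ∈ Λ, ∀ y ∈ Λ, ϖ * h x y ∈ OE := by
      rcases hdual with hsd | hmod
      · intro x hx y hy
        have : x ∈ hermDual OE h Λ := by rw [← hsd]; exact hx
        exact OE.mul_mem hϖmem (this y hy)
      · intro x hx y hy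
        have hD : hermDual OE h Λ = ϖ • (Λ : Set C) := by
          rw [hmod, smul_smul, mul_inv_cancel₀ hϖne, one_smul]
        have hmem : ϖ • x ∈ hermDual OE h Λ := by
          rw [hD]; exact Set.smul_mem_smul_set hx
        have := hmem y hy
        rwa [h_smul_left] at this
    -- interface fact 2 : deep elements
    have hDeepSD : IsSelfdual OE h Λ →
        ∀ z ∈ Λ, (∀ y ∈ Λ, ∃ w ∈ OE, h z y = ϖ * w) → ∃ y ∈ Λ, z = ϖ • y := by
      intro hsd z hz hall
      refine ⟨ϖ⁻¹ • z, ?_, ?_⟩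
      · have : ϖ⁻¹ • z ∈ hermDual OE h Λ := by
          intro y hy
          obtain ⟨w, hw, hzw⟩ := hall y hy
          rw [h_smul_left, hzw, ← mul_assoc, inv_mul_cancel₀ hϖne, one_mul]
          exact hw
        have h2 : ϖ⁻¹ • z ∈ (Λ : Set C) := by rw [hsd]; exact this
        exact h2
      · rw [smul_smul, mul_inv_cancel₀ hϖne, one_smul]
    have hDeepMod : IsModular ϖ⁻¹ OE h Λ →
        ∀ z : C, (∀ y ∈ Λ, h z y ∈ OE) → ∃ y ∈ Λ, z = ϖ • y := by
      intro hmod z hall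
      have hD : hermDual OE h Λ = ϖ • (Λ : Set C) := by
        rw [hmod, smul_smul, mul_inv_cancel₀ hϖne, one_smul]
      have hmem : z ∈ hermDual OE h Λ := hall
      rw [hD, Set.mem_smul_set] at hmem
      obtain ⟨y, hy, hzy⟩ := hmem
      exact ⟨y, hy, hzy.symm⟩
    -- interface fact 3 : unit pair
    have hNoInv : ∀ t ∈ OE, (¬ ∃ τ ∈ OE, t * τ = 1) → ∃ w ∈ OE, t = ϖ * w := by
      intro t ht hnv
      by_contra hc
      exact hnv (RPaux3.unit_of_not_vpi hπ₀ hϖ hσ hOE ht hc)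
    have hUnitPair : ∃ x ∈ Λ, ∃ y ∈ Λ, ∃ a b : integralClosure ℤ_[2] F,
        ϖ * h x y = algebraMap F E (a : F) + algebraMap F E (b : F) * ϖ ∧ IsUnit b := by
      rcases hdual with hsd | hmod
      · -- selfdual case
        have hSD : ∀ x ∈ Λ, ∀ y ∈ Λ, h x y ∈ OE := by
          intro x hx y hy
          have hx' : x ∈ (Λ : Set C) := hx
          rw [hsd] at hx'
          exact hx' y hy
        have hEx : ∃ x ∈ Λ, ∃ y ∈ Λ, ∃ τ ∈ OE, h x y * τ = 1 := by
          by_contra hno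
          push_neg at hno
          refine RPaux6.lat_nakayama hπ₀ hϖ hσ hgen hOE hlat.1 hlat.2 hCnt ?_
          intro x hx
          refine hDeepSD hsd x hx ?_
          intro y hy
          refine hNoInv _ (hSD x hx y hy) ?_
          rintro ⟨τ, hτ, hτ1⟩
          exact hno x hx y hy τ hτ hτ1
        obtain ⟨x, hx, y, hy, τ, hτOE, hτ1⟩ := hEx
        obtain ⟨a, b, hrep⟩ := (hOE (h x y)).mp (hSD x hx y hy)
        have ha : IsUnit a := by
          by_contra hna
          obtain ⟨y', hy', hvy'⟩ := RPaux3.unit_or_vpi hπ₀ hϖ hσ hOE (b := b) hna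
          rw [← hrep] at hvy'
          exact RPaux3.vpi_not_unit_OE hπ₀ hϖ hσ hOE hy' hτOE hvy' hτ1
        refine ⟨x, hx, y, hy, -(b * π₀), a, ?_, ha⟩
        have hc1 : ((-(b * π₀) : integralClosure ℤ_[2] F) : F) = -((b : F) * ((π₀ : F))) := by
          push_cast; ring
        rw [hc1, hrep, RPaux3.vpi_mul_rep hπ₀ hϖ hσ hOE]
      · -- modular case
        have hEx : ∃ x ∈ Λ, ∃ y ∈ Λ, ∃ τ ∈ OE, (ϖ * h x y) * τ = 1 := by
          by_contra hno
          push_neg at hno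
          refine RPaux6.lat_nakayama hπ₀ hϖ hσ hgen hOE hlat.1 hlat.2 hCnt ?_
          intro x hx
          refine hDeepMod hmod x ?_
          intro y hy
          have hu : ϖ * h x y ∈ OE := hInt x hx y hy
          obtain ⟨w, hw, hvw⟩ := hNoInv _ hu (by
            rintro ⟨τ, hτ, hτ1⟩
            exact hno x hx y hy τ hτ hτ1)
          have : h x y = w := mul_left_cancel₀ hϖne hvw
          rw [this]; exact hw
        obtain ⟨x, hx, y, hy, τ, hτOE, hτ1⟩ := hEx
        obtain ⟨a, b, hrep⟩ := (hOE (ϖ * h x y)).mp (hInt x hx y hy)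
        have ha : IsUnit a := by
          by_contra hna
          obtain ⟨y', hy', hvy'⟩ := RPaux3.unit_or_vpi hπ₀ hϖ hσ hOE (b := b) hna
          rw [← hrep] at hvy'
          exact RPaux3.vpi_not_unit_OE hπ₀ hϖ hσ hOE hy' hτOE hvy' hτ1
        have hy2 : ϖ • y ∈ Λ := Λ.smul_mem ⟨ϖ, hϖmem⟩ hy
        refine ⟨x, hx, ϖ • y, hy2, b * π₀, -a, ?_, ha.neg⟩
        have hc1 : ((b * π₀ : integralClosure ℤ_[2] F) : F) = (b : F) * ((π₀ : F)) := by
          push_cast; ring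
        have hc2 : ((-a : integralClosure ℤ_[2] F) : F) = -((a : F)) := by push_cast; ring
        calc ϖ * h x (ϖ • y) = ϖ * (σ ϖ * h x y) := by rw [h_smul_right]
          _ = -(ϖ * (ϖ * h x y)) := by rw [hσ]; ring
          _ = -(ϖ * (algebraMap F E ((a : F)) + algebraMap F E ((b : F)) * ϖ)) := by rw [hrep]
          _ = -(algebraMap F E (-((b : F) * ((π₀ : F)))) + algebraMap F E ((a : F)) * ϖ) := by
              rw [RPaux3.vpi_mul_rep hπ₀ hϖ hσ hOE]
          _ = algebraMap F E ((b * π₀ : integralClosure ℤ_[2] F) : F)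
              + algebraMap F E ((-a : integralClosure ℤ_[2] F) : F) * ϖ := by
              rw [hc1, hc2, map_neg, map_neg, map_mul]
              push_cast
              ring
    -- interface fact 4 : companion
    have hCompanion : ∀ z ∈ Λ, (¬ ∃ y ∈ Λ, z = ϖ • y) →
        ∃ w ∈ Λ, ∃ τ : E, τ ∈ OE ∧ σ τ ∈ OE ∧ h z w * τ = 1 ∧
          (∀ x ∈ Λ, ∀ y ∈ Λ, h x y * τ ∈ OE ∧ h x y * σ τ ∈ OE) := by
      intro z hz hprim
      rcases hdual with hsd | hmod
      · have hSD : ∀ x ∈ Λ, ∀ y ∈ Λ, h x y ∈ OE := by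
          intro x hx y hy
          have hx' : x ∈ (Λ : Set C) := hx
          rw [hsd] at hx'
          exact hx' y hy
        have hEx : ∃ w ∈ Λ, ∃ τ ∈ OE, h z w * τ = 1 := by
          by_contra hno
          push_neg at hno
          refine hprim (hDeepSD hsd z hz ?_)
          intro y hy
          refine hNoInv _ (hSD z hz y hy) ?_
          rintro ⟨τ, hτ, hτ1⟩
          exact hno y hy τ hτ hτ1
        obtain ⟨w, hw, τ, hτOE, hτ1⟩ := hEx
        exact ⟨w, hw, τ, hτOE, RPaux3.sigma_mem hπ₀ hϖ hσ hOE hτOE, hτ1,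
          fun x hx y hy => ⟨OE.mul_mem (hSD x hx y hy) hτOE,
            OE.mul_mem (hSD x hx y hy) (RPaux3.sigma_mem hπ₀ hϖ hσ hOE hτOE)⟩⟩
      · have hEx : ∃ w ∈ Λ, ∃ τ ∈ OE, (ϖ * h z w) * τ = 1 := by
          by_contra hno
          push_neg at hno
          refine hprim (hDeepMod hmod z ?_)
          intro y hy
          obtain ⟨w', hw', hvw'⟩ := hNoInv _ (hInt z hz y hy) (by
            rintro ⟨τ, hτ, hτ1⟩
            exact hno y hy τ hτ hτ1)
          have : h z y = w' := mul_left_cancel₀ hϖne hvw'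
          rw [this]; exact hw'
        obtain ⟨w, hw, u', hu'OE, hu'1⟩ := hEx
        have hσu' := RPaux3.sigma_mem hπ₀ hϖ hσ hOE hu'OE
        refine ⟨w, hw, u' * ϖ, OE.mul_mem hu'OE hϖmem, ?_, ?_, ?_⟩
        · rw [map_mul, hσ, mul_neg]
          exact OE.neg_mem (OE.mul_mem hσu' hϖmem)
        · calc h z w * (u' * ϖ) = (ϖ * h z w) * u' := by ring
            _ = 1 := hu'1
        · intro x hx y hy
          constructor
          · have he : h x y * (u' * ϖ) = (ϖ * h x y) * u' := by ring
            rw [he]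
            exact OE.mul_mem (hInt x hx y hy) hu'OE
          · rw [map_mul, hσ]
            have he : h x y * (σ u' * -ϖ) = -((ϖ * h x y) * σ u') := by ring
            rw [he]
            exact OE.neg_mem (OE.mul_mem (hInt x hx y hy) hσu')
    -- minimality
    have hmin : Submodule.span (integralClosure ℤ_[2] F) {(2 : F)} ≤ normIdeal F h Λ := by
      obtain ⟨x, hx, y, hy, a, b, hab, hbu⟩ := hUnitPair
      have htr : h x y + σ (h x y) = algebraMap F E (2 * (b : F)) :=
        RPaux6.trace_rep' hπ₀ hϖ hσ hgen hOE hab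
      obtain ⟨c1, hc1⟩ := qF (x + y)
      obtain ⟨c2, hc2⟩ := qF x
      obtain ⟨c3, hc3⟩ := qF y
      have hq : h (x + y) (x + y) = h x x + h y y + (h x y + σ (h x y)) := by
        rw [h_add_left, h_add_right, h_add_right, h_conj x y]
        ring
      have hsum : c1 - c2 - c3 = 2 * (b : F) := by
        apply halgInj
        rw [map_sub, map_sub]
        linear_combination hc1 + hq - hc2 - hc3 + htr
      have hm1 : c1 ∈ normIdeal F h Λ := Submodule.subset_span ⟨x + y, Λ.add_mem hx hy, hc1⟩
      have hm2 : c2 ∈ normIdeal F h Λ := Submodule.subset_span ⟨x, hx, hc2⟩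
      have hm3 : c3 ∈ normIdeal F h Λ := Submodule.subset_span ⟨y, hy, hc3⟩
      have h2b : (2 * (b : F)) ∈ normIdeal F h Λ := by
        rw [← hsum]; exact sub_mem (sub_mem hm1 hm2) hm3
      obtain ⟨binv, hbinv⟩ := isUnit_iff_exists_inv.mp hbu
      have h2 : (2 : F) ∈ normIdeal F h Λ := by
        have hsm := (normIdeal F h Λ).smul_mem binv h2b
        have he : binv • (2 * (b : F)) = (2 : F) := by
          have hsd : binv • (2 * (b : F)) = (binv : F) * (2 * (b : F)) := rfl
          have hb1 : (b : F) * (binv : F) = 1 := by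
            exact_mod_cast congrArg Subtype.val hbinv
          rw [hsd]
          linear_combination 2 * hb1
        rwa [he] at hsm
      intro s hs
      rw [Submodule.mem_span_singleton] at hs
      obtain ⟨r, hr⟩ := hs
      rw [← hr]
      exact (normIdeal F h Λ).smul_mem r h2
    refine ⟨hmin, ?_, ?_⟩
    · -- hyperbolic → norm ideal = 2 O
      intro hhyp
      refine le_antisymm ?_ hmin
      obtain ⟨bb, hq0, hq1⟩ := hhyp
      apply Submodule.span_le.mpr
      rintro c ⟨x, hxΛ, hcx⟩
      rw [SetLike.mem_coe, Submodule.mem_span_singleton]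
      set X : Λ := ⟨x, hxΛ⟩ with hX
      have hrep := bb.sum_repr X
      rw [Fin.sum_univ_two] at hrep
      set α : OE := bb.repr X 0 with hα
      set β : OE := bb.repr X 1 with hβ
      set v0 : C := ((bb 0 : Λ) : C) with hv0def
      set v1 : C := ((bb 1 : Λ) : C) with hv1def
      have hv0 : v0 ∈ Λ := (bb 0).2
      have hv1 : v1 ∈ Λ := (bb 1).2
      set γ : E := h v0 v1 with hγ
      have hxC : x = (α : E) • v0 + (β : E) • v1 := by
        have hcoe := congrArg (fun z : Λ => (z : C)) hrep
        simp at hcoe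
        exact hcoe.symm
      have hσσβ : σ (σ ((β : E))) = (β : E) := RPaux6.sigma_invol hπ₀ hϖ hσ hgen hOE _
      have hqx : h x x = ((α : E) * σ ((β : E)) * γ) + σ ((α : E) * σ ((β : E)) * γ) := by
        rw [hxC]
        simp only [h_add_left, h_add_right, h_smul_left, h_smul_right]
        rw [show h v0 v0 = 0 from hq0, show h v1 v1 = 0 from hq1, h_conj v0 v1]
        rw [map_mul, map_mul, hσσβ]
        ring
      set T : E := (α : E) * σ ((β : E)) * γ with hT
      have hϖT : ϖ * T ∈ OE := by
        have he : ϖ * T = (α : E) * σ ((β : E)) * (ϖ * γ) := by rw [hT]; ring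
        rw [he]
        exact OE.mul_mem (OE.mul_mem α.2 (RPaux3.sigma_mem hπ₀ hϖ hσ hOE β.2))
          (hInt v0 hv0 v1 hv1)
      obtain ⟨a', b', hab'⟩ := (hOE (ϖ * T)).mp hϖT
      have htr : T + σ T = algebraMap F E (2 * ((b' : F))) :=
        RPaux6.trace_rep' hπ₀ hϖ hσ hgen hOE hab'
      have hc2 : c = 2 * ((b' : F)) := by
        apply halgInj
        rw [hcx, hqx, htr]
      exact ⟨b', by rw [hc2]; exact mul_comm ((b' : F)) 2⟩
    · -- norm ideal = 2 O → hyperbolic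
      intro hNm
      have hall2 : ∀ e : E, ∃ k, ϖ ^ (2 * k) * e ∈ OE :=
        RPaux5.denom_E hπ₀ hϖ hσ hgen hOE
      -- a nonzero isotropic vector of Λ
      set v : C := bE 0 with hvdef
      have hvne : v ≠ 0 := bE.ne_zero 0
      have hvspan : v ∈ Submodule.span E (Λ : Set C) := by rw [hlat.2]; trivial
      obtain ⟨f, hsupp, hsum⟩ := Submodule.mem_span_set.mp hvspan
      have hkex : ∀ cc : C, ∃ k, ϖ ^ (2 * k) * f cc ∈ OE := fun cc => hall2 (f cc)
      choose kf hkf using hkex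
      set K := f.support.sup kf with hK
      have hz₀mem : ϖ ^ (2 * K) • v ∈ Λ := by
        rw [← hsum, Finsupp.sum, Finset.smul_sum]
        apply Submodule.sum_mem
        intro a ha
        have hsOE : ϖ ^ (2 * K) * f a ∈ OE := by
          have hle : kf a ≤ K := Finset.le_sup ha
          have he : ϖ ^ (2 * K) * f a = ϖ ^ (2 * (K - kf a)) * (ϖ ^ (2 * kf a) * f a) := by
            rw [← mul_assoc, ← pow_add]
            congr 2
            omega
          rw [he]
          exact OE.mul_mem (OE.pow_mem hϖmem _) (hkf a)
        have haΛ : a ∈ Λ := hsupp ha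
        have : (⟨ϖ ^ (2 * K) * f a, hsOE⟩ : OE) • a ∈ Λ := Λ.smul_mem _ haΛ
        rw [smul_smul]
        exact this
      set z₀ : C := ϖ ^ (2 * K) • v with hz₀def
      have hz₀ne : z₀ ≠ 0 := smul_ne_zero (pow_ne_zero _ hϖne) hvne
      have hz₀iso : h z₀ z₀ = 0 := by
        rw [hz₀def, h_smul_left, h_smul_right, show h v v = 0 from hbE00, mul_zero, mul_zero]
      -- bound on denominators over Λ
      obtain ⟨S, hS⟩ := hlat.1
      have hallw : ∀ w : C, ∃ k : ℕ, ∀ j : Fin 2, ϖ ^ (2 * k) * (bE.repr w j) ∈ OE := by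
        intro w
        obtain ⟨k0, hk0⟩ := hall2 (bE.repr w 0)
        obtain ⟨k1, hk1⟩ := hall2 (bE.repr w 1)
        refine ⟨k0 + k1, ?_⟩
        intro j
        fin_cases j
        · have he : ϖ ^ (2 * (k0 + k1)) * (bE.repr w 0) = ϖ ^ (2 * k1) * (ϖ ^ (2 * k0) * bE.repr w 0) := by
            rw [← mul_assoc, ← pow_add]
            congr 2
            omega
          rw [show (⟨0, by omega⟩ : Fin 2) = 0 from rfl, he]
          exact OE.mul_mem (OE.pow_mem hϖmem _) hk0
        · have he : ϖ ^ (2 * (k0 + k1)) * (bE.repr w 1) = ϖ ^ (2 * k0) * (ϖ ^ (2 * k1) * bE.repr w 1) := by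
            rw [← mul_assoc, ← pow_add]
            congr 2
            omega
          rw [show (⟨1, by omega⟩ : Fin 2) = 1 from rfl, he]
          exact OE.mul_mem (OE.pow_mem hϖmem _) hk1
      choose g hg using hallw
      set N := S.sup g with hN
      have hΛbound : ∀ y ∈ Λ, ∀ j : Fin 2, ϖ ^ (2 * N) * (bE.repr y j) ∈ OE := by
        set M : Submodule OE C :=
          { carrier := {y | ∀ j : Fin 2, ϖ ^ (2 * N) * (bE.repr y j) ∈ OE}
            add_mem' := by
              intro a b ha hb j
              rw [map_add, Finsupp.add_apply, mul_add]
              exact OE.add_mem (ha j) (hb j)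
            zero_mem' := by
              intro j
              rw [map_zero, Finsupp.zero_apply, mul_zero]
              exact OE.zero_mem
            smul_mem' := by
              intro s y hy j
              have hsy : (s • y : C) = (s : E) • y := rfl
              rw [hsy, map_smul, Finsupp.smul_apply, smul_eq_mul,
                show ϖ ^ (2 * N) * ((s : E) * bE.repr y j) = (s : E) * (ϖ ^ (2 * N) * bE.repr y j) by ring]
              exact OE.mul_mem s.2 (hy j) } with hM
        have hle : Λ ≤ M := by
          rw [← hS]
          apply Submodule.span_le.mpr
          intro w hw
          intro j
          have hgw : g w ≤ N := Finset.le_sup hw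
          have he : ϖ ^ (2 * N) * (bE.repr w j) = ϖ ^ (2 * (N - g w)) * (ϖ ^ (2 * g w) * bE.repr w j) := by
            rw [← mul_assoc, ← pow_add]
            congr 2
            omega
          rw [he]
          exact OE.mul_mem (OE.pow_mem hϖmem _) (hg w j)
        exact fun y hy j => hle hy j
      -- divisibility of z₀ is bounded
      have hBall : ¬ ∀ m : ℕ, ∃ y ∈ Λ, z₀ = ϖ ^ m • y := by
        intro hall
        have hj : ∃ j : Fin 2, bE.repr z₀ j ≠ 0 := by
          by_contra hno
          push_neg at hno
          apply hz₀ne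
          have hrz : bE.repr z₀ = 0 := by
            ext j
            exact hno j
          have := congrArg bE.repr.symm hrz
          simpa using this
        obtain ⟨j, hjne⟩ := hj
        set cE : E := ϖ ^ (2 * N) * bE.repr z₀ j with hcE
        have hcEne : cE ≠ 0 := mul_ne_zero (pow_ne_zero _ hϖne) hjne
        apply RPaux5.not_all_div hπ₀ hϖ hσ hgen hOE hcEne
        intro t
        obtain ⟨y, hy, hzy⟩ := hall (2 * t)
        have hrepr : bE.repr z₀ j = ϖ ^ (2 * t) * bE.repr y j := by
          rw [hzy, map_smul, Finsupp.smul_apply, smul_eq_mul]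
        refine ⟨ϖ ^ t * (ϖ ^ (2 * N) * bE.repr y j),
          OE.mul_mem (OE.pow_mem hϖmem t) (hΛbound y hy j), ?_⟩
        rw [hcE, hrepr, show 2 * t = t + t by omega, pow_add]
        ring
      have hBmax : ∃ m : ℕ, (∃ y ∈ Λ, z₀ = ϖ ^ m • y) ∧ ¬ (∃ y ∈ Λ, z₀ = ϖ ^ (m + 1) • y) := by
        by_contra hno
        push_neg at hno
        apply hBall
        intro m
        induction m with
        | zero => exact ⟨z₀, hz₀mem, by rw [pow_zero, one_smul]⟩
        | succ n ih => exact hno n ih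
      obtain ⟨m, ⟨e₀, he₀Λ, hz₀e⟩, hnot⟩ := hBmax
      have he₀ne : e₀ ≠ 0 := by
        rintro rfl
        rw [smul_zero] at hz₀e
        exact hz₀ne hz₀e
      have he₀iso : h e₀ e₀ = 0 := by
        have h0 : (0 : E) = ϖ ^ m * (σ (ϖ ^ m) * h e₀ e₀) := by
          rw [← hz₀iso, hz₀e, h_smul_left, h_smul_right]
        have hσϖm : σ (ϖ ^ m) ≠ 0 := by
          rw [map_pow, hσ]
          exact pow_ne_zero _ (neg_ne_zero.mpr hϖne)
        rcases mul_eq_zero.mp h0.symm with hc | hc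
        · exact absurd hc (pow_ne_zero _ hϖne)
        · rcases mul_eq_zero.mp hc with hc2 | hc2
          · exact absurd hc2 hσϖm
          · exact hc2
      have he₀prim : ¬ ∃ y ∈ Λ, e₀ = ϖ • y := by
        rintro ⟨y, hy, hey⟩
        exact hnot ⟨y, hy, by rw [hz₀e, hey, smul_smul, ← pow_succ]⟩
      -- companion vector and second isotropic vector
      obtain ⟨w, hwΛ, τ, hτOE, hστOE, hτ1, hτprop⟩ := hCompanion e₀ he₀Λ he₀prim
      have htne : h e₀ w ≠ 0 := by
        intro h0
        rw [h0, zero_mul] at hτ1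
        exact zero_ne_one hτ1
      obtain ⟨cw, hcw⟩ := qF w
      have hcwNm : cw ∈ normIdeal F h Λ := Submodule.subset_span ⟨w, hwΛ, hcw⟩
      rw [hNm, Submodule.mem_span_singleton] at hcwNm
      obtain ⟨s, hs⟩ := hcwNm
      have hcw2 : cw = 2 * ((s : F)) := by
        rw [← hs]
        show ((s : F)) * 2 = 2 * ((s : F))
        ring
      have hqw : h w w = algebraMap F E (2 * ((s : F))) := by rw [← hcw, hcw2]
      set μ : E := algebraMap F E (-((s : F))) * τ with hμdef
      have hμOE : μ ∈ OE := by
        rw [hμdef, map_neg]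
        exact OE.mul_mem (OE.neg_mem (RPaux3.algO_mem hπ₀ hϖ hσ hOE s)) hτOE
      set e₁ : C := w + μ • e₀ with he₁def
      have he₁Λ : e₁ ∈ Λ := Λ.add_mem hwΛ (Λ.smul_mem ⟨μ, hμOE⟩ he₀Λ)
      have hμt : μ * h e₀ w = algebraMap F E (-((s : F))) := by
        rw [hμdef, mul_assoc, mul_comm τ (h e₀ w), hτ1, mul_one]
      have hσμt : σ μ * σ (h e₀ w) = algebraMap F E (-((s : F))) := by
        rw [← map_mul, hμt, AlgEquiv.commutes]
      have he₁iso : h e₁ e₁ = 0 := by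
        rw [he₁def]
        simp only [h_add_left, h_add_right, h_smul_left, h_smul_right]
        rw [he₀iso, h_conj e₀ w]
        have halg : algebraMap F E (2 * ((s : F))) + algebraMap F E (-((s : F)))
            + algebraMap F E (-((s : F))) = 0 := by
          rw [map_neg, map_mul, map_ofNat]
          ring
        linear_combination hqw + hσμt + hμt + halg
      have he₀e₁eq : h e₀ e₁ = h e₀ w := by
        rw [he₁def, h_add_right, h_smul_right, he₀iso, mul_zero, add_zero]
      have he₁ne : e₁ ≠ 0 := by
        intro h0
        apply htne
        rw [← he₀e₁eq, h0]
        exact h0r e₀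
      -- linear independence over E
      have hli : LinearIndependent E ![e₀, e₁] := by
        rw [LinearIndependent.pair_iff]
        intro sa sb hab
        have h2 : h (sa • e₀ + sb • e₁) e₁ = sa * h e₀ e₁ := by
          rw [h_add_left, h_smul_left, h_smul_left, he₁iso]
          ring
        rw [hab, h0l] at h2
        have h1 : sa * h e₀ e₁ = 0 := h2.symm
        have hte : h e₀ e₁ ≠ 0 := by rw [he₀e₁eq]; exact htne
        have hsa : sa = 0 := by
          rcases mul_eq_zero.mp h1 with hc | hc
          · exact hc
          · exact absurd hc hte
        refine ⟨hsa, ?_⟩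
        rw [hsa, zero_smul, zero_add] at hab
        rcases smul_eq_zero.mp hab with hc | hc
        · exact hc
        · exact absurd hc he₁ne
      -- orthogonality to e₀, e₁ forces zero
      have hspan2 : ∀ d : C, h d e₀ = 0 → h d e₁ = 0 → d = 0 := by
        intro d hd0 hd1
        apply h_nondeg
        intro y
        have hcard : Fintype.card (Fin 2) = Module.finrank E C := by simp [hdimC]
        set bC := basisOfLinearIndependentOfCardEqFinrank hli hcard with hbCdef
        have hbC : ∀ i, bC i = ![e₀, e₁] i := fun i => by
          rw [hbCdef, coe_basisOfLinearIndependentOfCardEqFinrank]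
        have hy := bC.sum_repr y
        rw [Fin.sum_univ_two] at hy
        rw [← hy, h_add_right, h_smul_right, h_smul_right, hbC 0, hbC 1]
        rw [show (![e₀, e₁] 0 : C) = e₀ from rfl, show (![e₀, e₁] 1 : C) = e₁ from rfl]
        rw [hd0, hd1, mul_zero, mul_zero, add_zero]
      -- coordinates of lattice vectors
      have hcoord : ∀ z ∈ Λ, ∃ A B : E, A ∈ OE ∧ B ∈ OE ∧ z = A • e₀ + B • e₁ := by
        intro z hz
        set A : E := h z e₁ * τ with hAdef
        set B : E := h z e₀ * σ τ with hBdef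
        have hστ1 : σ τ * σ (h e₀ e₁) = 1 := by
          rw [← map_mul, he₀e₁eq, mul_comm τ (h e₀ w), hτ1, map_one]
        have hd0 : h (z - (A • e₀ + B • e₁)) e₀ = 0 := by
          rw [h_sub_left, h_add_left, h_smul_left, h_smul_left, he₀iso, h_conj e₀ e₁]
          rw [hBdef]
          linear_combination (-(h z e₀)) * hστ1
        have hd1 : h (z - (A • e₀ + B • e₁)) e₁ = 0 := by
          rw [h_sub_left, h_add_left, h_smul_left, h_smul_left, he₁iso, he₀e₁eq]
          rw [hAdef]
          linear_combination (-(h z e₁)) * hτ1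
        have hdz := hspan2 _ hd0 hd1
        exact ⟨A, B, (hτprop z hz e₁ he₁Λ).1, (hτprop z hz e₀ he₀Λ).2, sub_eq_zero.mp hdz⟩
      -- the O_E-basis of Λ
      set V : Fin 2 → Λ := ![⟨e₀, he₀Λ⟩, ⟨e₁, he₁Λ⟩] with hVdef
      have hliOE : LinearIndependent OE fun i => ((V i : Λ) : C) := by
        have hVc : (fun i => ((V i : Λ) : C)) = ![e₀, e₁] := by
          funext i
          fin_cases i <;> rfl
        rw [hVc]
        apply hli.restrict_scalars (R := OE)
        intro a b hab2
        apply Subtype.coe_injective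
        have : (a : E) * 1 = (b : E) * 1 := hab2
        simpa using this
      have hliV : LinearIndependent OE V := LinearIndependent.of_comp Λ.subtype hliOE
      have hspanV : ⊤ ≤ Submodule.span OE (Set.range V) := by
        intro zz _
        obtain ⟨A, B, hA, hB, hzAB⟩ := hcoord (zz : C) zz.2
        have hzz : zz = (⟨A, hA⟩ : OE) • V 0 + (⟨B, hB⟩ : OE) • V 1 := by
          apply Subtype.coe_injective
          exact hzAB
        rw [hzz]
        exact add_mem (Submodule.smul_mem _ _ (Submodule.subset_span (Set.mem_range_self 0)))
          (Submodule.smul_mem _ _ (Submodule.subset_span (Set.mem_range_self 1)))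
      refine ⟨Module.Basis.mk hliV hspanV, ?_, ?_⟩
      · rw [Module.Basis.mk_apply]
        exact he₀iso
      · rw [Module.Basis.mk_apply]
        exact he₁iso
  refine ⟨?_, ?_, ?_⟩
  · intro Λ hl hsd
    exact (main Λ hl (Or.inl hsd)).2
  · intro Λ hl hmod
    exact (main Λ hl (Or.inr hmod)).2
  · intro Λ hl hd
    exact (main Λ hl hd).1

end
end

section
/- Let F be a finite extension of ℚ₂ with ring of integers O_F, π₀ ∈ O_F a uniformizer, and t ∈ O_F with π₀ ∣ t and t ∣ 2; set s = t/π₀ ∈ O_F and k = O_F/(π₀). Let A = O_F[y₁₁, y₁₂, y₂₁, y₂₂]/I, where I is the ideal generated by the six elements y₁₁ + y₂₂ − t, y₁₁·y₂₂ − y₁₂·y₂₁ − π₀, t·(s·y₂₂ + 2), y₁₁·(s·y₂₂ + 2), y₂₁·(s·y₂₂ + 2), and y₁₂·(s·y₂₂ + 2). Then the ideal m of A generated by the images of π₀, y₁₁, y₁₂, y₂₁, y₂₂ is a maximal ideal with residue field A/m ≅ k, and the k-vector space m/m² has dimension exactly 3. (This is the tangent-space computation showing that the deformation space of an intersection point of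 the naive moduli space 𝒩_E^naive in the (R-U) case has 3-dimensional tangent space, whereas the Drinfeld moduli space is regular of dimension 2.) -/
/-!
Reducing the constant term modulo `π₀` is a surjection `A → O_F/(π₀)` with kernel `m`, so `m` is
maximal with residue field `k`. In `A` we have `π₀ = y₁₁y₂₂ - y₁₂y₂₁ ∈ m²`, hence `t = π₀ s ∈ m²`,
and `y₂₂ = t - y₁₁ ≡ -y₁₁`, so `m/m²` is spanned by `y₁₁, y₁₂, y₂₁`. These are independent: as
`π₀ ∣ t ∣ 2`, the relations vanish at the three `k[ε]`-points `(ε, 0, 0, -ε)`, `(0, ε, 0, 0)`,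
`(0, 0, ε, 0)` lying over the closed point, and the `ε`-coefficient of such a point vanishes on `m²`
and reads off the corresponding coordinate.
-/

set_option synthInstance.maxHeartbeats 1000000
set_option maxHeartbeats 4000000

noncomputable section

open MvPolynomial

/-- The ideal of relations of the deformation ring of an intersection point of
`𝒩_E^naive` in the (R-U) case: it is generated by `y₁₁ + y₂₂ − t`,
`y₁₁·y₂₂ − y₁₂·y₂₁ − π₀`, `t·(s·y₂₂ + 2)`, `y₁₁·(s·y₂₂ + 2)`, `y₂₁·(s·y₂₂ + 2)` and
`y₁₂·(s·y₂₂ + 2)`, where `y₁₁ = X 0`, `y₁₂ = X 1`, `y₂₁ = X 2`, `y₂₂ = X 3`. -/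
def deformationIdeal (R : Type*) [CommRing R] (π₀ t s : R) :
    Ideal (MvPolynomial (Fin 4) R) :=
  Ideal.span
    {X 0 + X 3 - C t,
     X 0 * X 3 - X 1 * X 2 - C π₀,
     C t * (C s * X 3 + 2),
     X 0 * (C s * X 3 + 2),
     X 2 * (C s * X 3 + 2),
     X 1 * (C s * X 3 + 2)}

/-- The deformation ring `A = O_F[y₁₁, y₁₂, y₂₁, y₂₂]/I`. -/
def deformationRing (R : Type*) [CommRing R] (π₀ t s : R) : Type _ :=
  MvPolynomial (Fin 4) R ⧸ deformationIdeal R π₀ t s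

noncomputable instance (R : Type*) [CommRing R] (π₀ t s : R) :
    CommRing (deformationRing R π₀ t s) :=
  inferInstanceAs (CommRing (MvPolynomial (Fin 4) R ⧸ deformationIdeal R π₀ t s))

/-- The ideal `m` of `A` generated by (the images of) `π₀` and the variables `y_{ij}`. -/
def deformationMaxIdeal (R : Type*) [CommRing R] (π₀ t s : R) :
    Ideal (deformationRing R π₀ t s) :=
  Ideal.span
    (insert ((Ideal.Quotient.mk (deformationIdeal R π₀ t s)) (C π₀))
      (Set.range fun i : Fin 4 =>
        (Ideal.Quotient.mk (deformationIdeal R π₀ t s)) (X i)))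

namespace MvPolynomial

theorem sub_C_constantCoeff_mem_span_range_X {R σ : Type*} [CommRing R] (p : MvPolynomial σ R) :
    p - C (constantCoeff p) ∈ Ideal.span (Set.range (X : σ → MvPolynomial σ R)) := by
  induction p using MvPolynomial.induction_on with
  | C a => simp
  | add p q hp hq => simpa only [map_add, C_add, add_sub_add_comm] using add_mem hp hq
  | mul_X p i _ =>
    simpa only [map_mul, constantCoeff_X, mul_zero, map_zero, sub_zero]
      using Ideal.mul_mem_left _ p (Ideal.subset_span (Set.mem_range_self i))

theorem ker_mk_comp_constantCoeff {R σ : Type*} [CommRing R] (a : R) :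
    RingHom.ker ((Ideal.Quotient.mk (Ideal.span {a})).comp
      (constantCoeff : MvPolynomial σ R →+* R)) = Ideal.span (insert (C a) (Set.range X)) := by
  refine le_antisymm (fun p hp => ?_) (Ideal.span_le.2 ?_)
  · obtain ⟨u, hu⟩ := Ideal.mem_span_singleton.1 (Ideal.Quotient.eq_zero_iff_mem.1 hp)
    rw [← add_sub_cancel (C (constantCoeff p)) p]
    refine add_mem ?_ <|
      Ideal.span_mono (Set.subset_insert _ _) (sub_C_constantCoeff_mem_span_range_X p)
    rw [hu, C_mul]
    exact Ideal.mul_mem_right _ _ (Ideal.subset_span (Set.mem_insert _ _))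
  · rintro _ (rfl | ⟨i, rfl⟩) <;> simp

def dualNumberEval {R K σ : Type*} [CommRing R] [CommRing K] (f : R →+* K) (v : σ → K) :
    MvPolynomial σ R →+* DualNumber K :=
  eval₂Hom ((TrivSqZeroExt.inlHom K K).comp f) fun i => TrivSqZeroExt.inr (v i)

theorem fst_dualNumberEval {R K σ : Type*} [CommRing R] [CommRing K] (f : R →+* K) (v : σ → K)
    (p : MvPolynomial σ R) : (dualNumberEval f v p).fst = f (constantCoeff p) := by
  have : (TrivSqZeroExt.fstHom K K K).toRingHom.comp (dualNumberEval f v) =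
      f.comp constantCoeff := by
    ext <;> simp [dualNumberEval]
  exact RingHom.congr_fun this p

theorem snd_dualNumberEval_X {R K σ : Type*} [CommRing R] [CommRing K] (f : R →+* K)
    (v : σ → K) (i : σ) : (dualNumberEval f v (X i)).snd = v i := by
  simp [dualNumberEval]

end MvPolynomial

theorem Ideal.span_toCotangent_coe_preimage_eq_top {A : Type*} [CommRing A] {m : Ideal A}
    {S : Set A} (hS : Ideal.span S = m) :
    Submodule.span (A ⧸ m) (m.toCotangent '' (((↑) : m → A) ⁻¹' S)) = ⊤ := by
  subst hS
  rw [← Submodule.restrictScalars_eq_top_iff A,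
    Submodule.restrictScalars_span A _ Ideal.Quotient.mk_surjective, ← Submodule.map_span,
    Submodule.span_span_coe_preimage, Submodule.map_top, Ideal.toCotangent_range]

theorem Ideal.snd_apply_eq_zero_of_mem_sq {A K : Type*} [CommRing A] [CommRing K] {m : Ideal A}
    (χ : A →+* DualNumber K) (hχ : ∀ a ∈ m, (χ a).fst = 0) {z : A} (hz : z ∈ m ^ 2) :
    (χ z).snd = 0 := by
  rw [pow_two] at hz
  refine Submodule.mul_induction_on hz (fun a ha b hb => ?_) fun x y hx hy => ?_
  · simp [hχ a ha, hχ b hb]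
  · rw [map_add, TrivSqZeroExt.snd_add, hx, hy, add_zero]

theorem Ideal.linearIndependent_toCotangent_of_dualNumber {A K ι : Type*} [CommRing A]
    [CommRing K] [Fintype ι] {m : Ideal A} {ψ : A →+* K} (hψ : RingHom.ker ψ = m)
    (x : ι → m) (χ : ι → A →+* DualNumber K) (hfst : ∀ j a, (χ j a).fst = ψ a)
    (hsnd_self : ∀ i, (χ i (x i)).snd = 1)
    (hsnd_ne : ∀ i j, i ≠ j → (χ j (x i)).snd = 0) :
    LinearIndependent (A ⧸ m) fun i => m.toCotangent (x i) := by
  have hψm : ∀ a ∈ m, ψ a = 0 := fun a ha => by rwa [← hψ] at ha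
  rw [Fintype.linearIndependent_iff]
  intro g hg j
  choose a ha using fun i => Ideal.Quotient.mk_surjective (I := m) (g i)
  have hsq : ((∑ i, a i • x i : m) : A) ∈ m ^ 2 := by
    rw [← Ideal.toCotangent_eq_zero, map_sum]
    simpa only [map_smul, ← ha, ← Ideal.Quotient.algebraMap_eq, algebraMap_smul] using hg
  have hsnd := Ideal.snd_apply_eq_zero_of_mem_sq (χ j) (fun b hb => (hfst j b).trans (hψm b hb)) hsq
  simp only [Submodule.coe_sum, Submodule.coe_smul, smul_eq_mul, map_sum, map_mul,
    TrivSqZeroExt.snd_sum, DualNumber.snd_mul, hfst, hψm _ (x _).2, mul_zero, add_zero] at hsnd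
  rw [Finset.sum_eq_single j (fun i _ hij => by rw [hsnd_ne i j hij, mul_zero]) (by simp),
    hsnd_self, mul_one] at hsnd
  rw [← ha, Ideal.Quotient.eq_zero_iff_mem, ← hψ]
  exact hsnd

section Deformation

variable {O : Type*} [CommRing O] (π₀ t s : O)

local notation "q" => Ideal.Quotient.mk (deformationIdeal O π₀ t s)

theorem deformationRing_mk_X_three : q (X 3) = q (C t) - q (X 0) := by
  have : q (X 0 + X 3 - C t) = 0 :=
    Ideal.Quotient.eq_zero_iff_mem.2 (Ideal.subset_span (by simp))
  rw [map_sub, map_add] at this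
  linear_combination this

theorem deformationRing_mk_C_π₀ : q (C π₀) = q (X 0) * q (X 3) - q (X 1) * q (X 2) := by
  have : q (X 0 * X 3 - X 1 * X 2 - C π₀) = 0 :=
    Ideal.Quotient.eq_zero_iff_mem.2 (Ideal.subset_span (by simp))
  rw [map_sub, map_sub, map_mul, map_mul] at this
  linear_combination -this

theorem mk_X_mem_deformationMaxIdeal (i : Fin 4) : q (X i) ∈ deformationMaxIdeal O π₀ t s :=
  Ideal.subset_span (Set.mem_insert_of_mem _ ⟨i, rfl⟩)

theorem mk_C_π₀_mem_deformationMaxIdeal_sq :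
    q (C π₀) ∈ deformationMaxIdeal O π₀ t s ^ 2 := by
  rw [deformationRing_mk_C_π₀, pow_two]
  have hX := mk_X_mem_deformationMaxIdeal π₀ t s
  exact sub_mem (Ideal.mul_mem_mul (hX 0) (hX 3)) (Ideal.mul_mem_mul (hX 1) (hX 2))

theorem mk_C_mem_deformationMaxIdeal_sq (hs : π₀ * s = t) :
    q (C t) ∈ deformationMaxIdeal O π₀ t s ^ 2 := by
  have h := Ideal.mul_mem_left _ (q (C s)) (mk_C_π₀_mem_deformationMaxIdeal_sq π₀ t s)
  rwa [← map_mul, ← C_mul, mul_comm s, hs] at h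

theorem deformationIdeal_le_ker_residue (hπt : π₀ ∣ t) :
    deformationIdeal O π₀ t s ≤
      RingHom.ker ((Ideal.Quotient.mk (Ideal.span {π₀})).comp constantCoeff) := by
  have ht : Ideal.Quotient.mk (Ideal.span {π₀}) t = 0 :=
    Ideal.Quotient.eq_zero_iff_mem.2 (Ideal.mem_span_singleton.2 hπt)
  rw [deformationIdeal, Ideal.span_le]
  rintro _ (rfl | rfl | rfl | rfl | rfl | rfl) <;> simp [ht]

def deformationResidue (hπt : π₀ ∣ t) :
    deformationRing O π₀ t s →+* O ⧸ Ideal.span {π₀} :=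
  Ideal.Quotient.lift _ _ (deformationIdeal_le_ker_residue π₀ t s hπt)

variable {π₀ t s}

theorem deformationResidue_mk (hπt : π₀ ∣ t) (p : MvPolynomial (Fin 4) O) :
    deformationResidue π₀ t s hπt (q p) = Ideal.Quotient.mk _ (constantCoeff p) :=
  Ideal.Quotient.lift_mk _ _ _

theorem deformationResidue_surjective (hπt : π₀ ∣ t) :
    Function.Surjective (deformationResidue π₀ t s hπt) := by
  intro c
  obtain ⟨r, rfl⟩ := Ideal.Quotient.mk_surjective c
  exact ⟨q (C r), by rw [deformationResidue_mk, constantCoeff_C]⟩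

theorem ker_deformationResidue (hπt : π₀ ∣ t) :
    RingHom.ker (deformationResidue π₀ t s hπt) = deformationMaxIdeal O π₀ t s := by
  refine (Ideal.ker_quotient_lift _ (deformationIdeal_le_ker_residue π₀ t s hπt)).trans ?_
  rw [ker_mk_comp_constantCoeff, Ideal.map_span, Set.image_insert_eq, ← Set.range_comp]
  rfl

theorem deformationMaxIdeal_isMaximal (hmax : (Ideal.span {π₀} : Ideal O).IsMaximal)
    (hπt : π₀ ∣ t) : (deformationMaxIdeal O π₀ t s).IsMaximal := by
  let := Ideal.Quotient.field (Ideal.span {π₀})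
  rw [← ker_deformationResidue hπt]
  exact RingHom.ker_isMaximal_of_surjective _ (deformationResidue_surjective hπt)

def deformationResidueEquiv (hπt : π₀ ∣ t) :
    deformationRing O π₀ t s ⧸ deformationMaxIdeal O π₀ t s ≃+* O ⧸ Ideal.span {π₀} :=
  (Ideal.quotEquivOfEq (ker_deformationResidue hπt).symm).trans
    (RingHom.quotientKerEquivOfSurjective (deformationResidue_surjective hπt))

theorem deformationIdeal_le_ker_dualNumberEval {K : Type*} [CommRing K] {f : O →+* K}
    (hπ₀ : f π₀ = 0) (ht : f t = 0) (h2 : (2 : K) = 0) {v : Fin 4 → K}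
    (hv : v 0 + v 3 = 0) :
    deformationIdeal O π₀ t s ≤ RingHom.ker (dualNumberEval f v) := by
  have h2' : (2 : DualNumber K) = 0 := by
    ext
    · rw [← Nat.cast_ofNat, TrivSqZeroExt.fst_natCast, Nat.cast_ofNat, h2,
        TrivSqZeroExt.fst_zero]
    · rfl
  rw [deformationIdeal, Ideal.span_le]
  rintro _ (rfl | rfl | rfl | rfl | rfl | rfl) <;> ext <;>
    simp [dualNumberEval, hπ₀, ht, h2', hv]

variable (π₀ t s) in
def deformationVarCotangent (i : Fin 4) : (deformationMaxIdeal O π₀ t s).Cotangent :=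
  (deformationMaxIdeal O π₀ t s).toCotangent
    ⟨q (X i), mk_X_mem_deformationMaxIdeal π₀ t s i⟩

theorem deformationVarCotangent_three (hs : π₀ * s = t) :
    deformationVarCotangent π₀ t s 3 = -deformationVarCotangent π₀ t s 0 := by
  rw [deformationVarCotangent, deformationVarCotangent, ← map_neg, Ideal.toCotangent_eq,
    Submodule.coe_neg, sub_neg_eq_add]
  have h := mk_C_mem_deformationMaxIdeal_sq π₀ t s hs
  rwa [← add_eq_of_eq_sub (deformationRing_mk_X_three π₀ t s)] at h

theorem span_deformationVarCotangent_eq_top (hs : π₀ * s = t) :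
    Submodule.span (deformationRing O π₀ t s ⧸ deformationMaxIdeal O π₀ t s)
      (Set.range fun i : Fin 3 => deformationVarCotangent π₀ t s i.castSucc) = ⊤ := by
  rw [eq_top_iff, ← Ideal.span_toCotangent_coe_preimage_eq_top
    (m := deformationMaxIdeal O π₀ t s) rfl, Submodule.span_le]
  rintro _ ⟨⟨y, _⟩, hyS, rfl⟩
  rcases hyS with rfl | ⟨i, rfl⟩
  · rw [(Ideal.toCotangent_eq_zero _ _).2 (mk_C_π₀_mem_deformationMaxIdeal_sq π₀ t s)]
    exact zero_mem _
  · fin_cases i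
    · exact Submodule.subset_span ⟨0, rfl⟩
    · exact Submodule.subset_span ⟨1, rfl⟩
    · exact Submodule.subset_span ⟨2, rfl⟩
    · change deformationVarCotangent π₀ t s 3 ∈ _
      rw [deformationVarCotangent_three hs]
      exact neg_mem (Submodule.subset_span ⟨0, rfl⟩)

-- `y₂₂` moves by `-ε` along with `y₁₁` so that the trace relation `y₁₁ + y₂₂ = t` survives.
def deformationTangentVector {K : Type*} [CommRing K] : Fin 3 → Fin 4 → K :=
  ![![1, 0, 0, -1], ![0, 1, 0, 0], ![0, 0, 1, 0]]

def deformationTangentHom (hπt : π₀ ∣ t) (hπ2 : π₀ ∣ 2) (j : Fin 3) :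
    deformationRing O π₀ t s →+* DualNumber (O ⧸ Ideal.span {π₀}) :=
  Ideal.Quotient.lift _ (dualNumberEval (Ideal.Quotient.mk _) (deformationTangentVector j))
    (deformationIdeal_le_ker_dualNumberEval
      (Ideal.Quotient.eq_zero_iff_mem.2 (Ideal.mem_span_singleton_self π₀))
      (Ideal.Quotient.eq_zero_iff_mem.2 (Ideal.mem_span_singleton.2 hπt))
      ((map_ofNat (Ideal.Quotient.mk _) 2).symm.trans
        (Ideal.Quotient.eq_zero_iff_mem.2 (Ideal.mem_span_singleton.2 hπ2)))
      (by fin_cases j <;> simp [deformationTangentVector]))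

theorem fst_deformationTangentHom (hπt : π₀ ∣ t) (hπ2 : π₀ ∣ 2) (j : Fin 3)
    (a : deformationRing O π₀ t s) :
    (deformationTangentHom hπt hπ2 j a).fst = deformationResidue π₀ t s hπt a := by
  obtain ⟨p, rfl⟩ := Ideal.Quotient.mk_surjective a
  exact (fst_dualNumberEval _ _ p).trans (deformationResidue_mk hπt p).symm

theorem snd_deformationTangentHom_mk_X (hπt : π₀ ∣ t) (hπ2 : π₀ ∣ 2) (j : Fin 3)
    (i : Fin 4) :
    (deformationTangentHom hπt hπ2 j (q (X i))).snd = deformationTangentVector j i :=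
  snd_dualNumberEval_X _ _ i

theorem linearIndependent_deformationVarCotangent (hπt : π₀ ∣ t) (hπ2 : π₀ ∣ 2) :
    LinearIndependent (deformationRing O π₀ t s ⧸ deformationMaxIdeal O π₀ t s)
      fun i : Fin 3 => deformationVarCotangent π₀ t s i.castSucc := by
  have h := Ideal.linearIndependent_toCotangent_of_dualNumber
    (ker_deformationResidue (s := s) hπt)
    (fun i : Fin 3 => ⟨q (X i.castSucc), mk_X_mem_deformationMaxIdeal π₀ t s _⟩)
    (deformationTangentHom hπt hπ2) (fst_deformationTangentHom hπt hπ2)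
    (fun i => by fin_cases i <;> simp [snd_deformationTangentHom_mk_X, deformationTangentVector])
    fun i j hij => by
      fin_cases i <;> fin_cases j <;>
        simp_all [snd_deformationTangentHom_mk_X, deformationTangentVector]
  exact h

theorem finrank_cotangent_deformationMaxIdeal (hmax : (Ideal.span {π₀} : Ideal O).IsMaximal)
    (ht2 : t ∣ 2) (hs : π₀ * s = t) :
    Module.finrank (deformationRing O π₀ t s ⧸ deformationMaxIdeal O π₀ t s)
      (deformationMaxIdeal O π₀ t s).Cotangent = 3 := by
  have hπt : π₀ ∣ t := ⟨s, hs.symm⟩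
  have := deformationMaxIdeal_isMaximal (s := s) hmax hπt
  let := Ideal.Quotient.field (deformationMaxIdeal O π₀ t s)
  rw [Module.finrank_eq_card_basis (Module.Basis.mk
    (linearIndependent_deformationVarCotangent hπt (hπt.trans ht2))
    (span_deformationVarCotangent_eq_top hs).ge), Fintype.card_fin]

end Deformation

theorem deformation_ring_tangent_dim_three_general
    (F : Type*) [Field F] [Algebra ℤ_[2] F]
    [IsLocalRing (integralClosure ℤ_[2] F)]
    (π₀ t s : integralClosure ℤ_[2] F)
    (hπ₀ : IsLocalRing.maximalIdeal (integralClosure ℤ_[2] F) = Ideal.span {π₀})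
    (ht2 : t ∣ 2) (hs : π₀ * s = t) :
    (deformationMaxIdeal (integralClosure ℤ_[2] F) π₀ t s).IsMaximal ∧
    Nonempty
      ((deformationRing (integralClosure ℤ_[2] F) π₀ t s ⧸
          deformationMaxIdeal (integralClosure ℤ_[2] F) π₀ t s) ≃+*
        ((integralClosure ℤ_[2] F) ⧸
          (Ideal.span {π₀} : Ideal (integralClosure ℤ_[2] F)))) ∧
    Module.finrank
      (deformationRing (integralClosure ℤ_[2] F) π₀ t s ⧸
        deformationMaxIdeal (integralClosure ℤ_[2] F) π₀ t s)
      (deformationMaxIdeal (integralClosure ℤ_[2] F) π₀ t s).Cotangent = 3 := by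
  have hmax : (Ideal.span {π₀} : Ideal (integralClosure ℤ_[2] F)).IsMaximal :=
    hπ₀ ▸ IsLocalRing.maximalIdeal.isMaximal _
  have hπt : π₀ ∣ t := ⟨s, hs.symm⟩
  exact ⟨deformationMaxIdeal_isMaximal hmax hπt, ⟨deformationResidueEquiv hπt⟩,
    finrank_cotangent_deformationMaxIdeal hmax ht2 hs⟩

/-- **Tangent space of the deformation ring of an intersection point, (R-U) case.**
Let `F|ℚ₂` be finite with ring of integers `O_F`, uniformizer `π₀`, and `t ∈ O_F` with
`π₀ ∣ t`, `t ∣ 2`; set `s = t/π₀` and `k = O_F/(π₀)`.  Let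
`A = O_F[y₁₁,y₁₂,y₂₁,y₂₂]/I` with `I` as above.  Then the ideal `m` of `A` generated by
`π₀, y₁₁, y₁₂, y₂₁, y₂₂` is maximal with residue field `A/m ≅ k`, and the `k`-vector
space `m/m²` has dimension exactly `3`. -/
theorem deformation_ring_tangent_dim_three
    (F : Type*) [Field F] [Algebra ℚ_[2] F] [FiniteDimensional ℚ_[2] F]
    [Algebra ℤ_[2] F] [IsScalarTower ℤ_[2] ℚ_[2] F]
    [IsLocalRing (integralClosure ℤ_[2] F)]
    (π₀ t s : integralClosure ℤ_[2] F)
    (hπ₀ : IsLocalRing.maximalIdeal (integralClosure ℤ_[2] F) = Ideal.span {π₀})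
    (hπt : π₀ ∣ t) (ht2 : t ∣ 2) (hs : π₀ * s = t) :
    (deformationMaxIdeal (integralClosure ℤ_[2] F) π₀ t s).IsMaximal ∧
    Nonempty
      ((deformationRing (integralClosure ℤ_[2] F) π₀ t s ⧸
          deformationMaxIdeal (integralClosure ℤ_[2] F) π₀ t s) ≃+*
        ((integralClosure ℤ_[2] F) ⧸
          (Ideal.span {π₀} : Ideal (integralClosure ℤ_[2] F)))) ∧
    Module.finrank
      (deformationRing (integralClosure ℤ_[2] F) π₀ t s ⧸
        deformationMaxIdeal (integralClosure ℤ_[2] F) π₀ t s)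
      (deformationMaxIdeal (integralClosure ℤ_[2] F) π₀ t s).Cotangent = 3 :=
  deformation_ring_tangent_dim_three_general F π₀ t s hπ₀ ht2 hs

end
end
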